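/- arXiv:2511.12091 — 8 statements merged into one kernel-verified Lean document; each statement's English description precedes it below -/
import Mathlib

section
/- Let u ∈ C²[0,T) with u(0) = u₀ > 0 and u'(0) = 0 satisfy ((N−1)u'(r)/r)^{1/(N−1)} · (u''(r) + ((N−2)/r)u'(r)) = K(r)f(u(r)) for all r ∈ (0,T), where u'(r) > 0 on (0,T). Then for all r ∈ [0,T), u(r) = u₀ + ∫₀^r (t^{2−N}/(N−1)) · (∫₀^t N τ^{N−1} K(τ) f(u(τ)) dτ)^{(N−1)/N} dt. -/
open Set Filter Topology intervalIntegral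

/-!
For a radial function with `u' > 0` the left-hand side of the equation is the divergence form
`(N r^(N-1))⁻¹ · (d/dr) ((N-1) r^(N-2) u'(r))^(N/(N-1))`. Integrating the equation once from `0`
(where `u'(0) = 0` makes the flux vanish) gives the flux as `∫₀^r N τ^(N-1) K f(u)`; solving for `u'`
and integrating again gives the integral equation.
-/

noncomputable section

def radialFlux (n t x : ℝ) : ℝ := ((n - 1) * t ^ (n - 2) * x) ^ (n / (n - 1))

theorem hasDerivAt_radialFlux {n t w : ℝ} {v : ℝ → ℝ} (hn : 1 < n) (ht : 0 < t) (hvt : 0 < v t)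
    (hv : HasDerivAt v w t) :
    HasDerivAt (fun s => radialFlux n s (v s))
      (n * t ^ (n - 1) * (((n - 1) * v t / t) ^ (n - 1)⁻¹ * (w + (n - 2) / t * v t))) t := by
  have hn1 : n - 1 ≠ 0 := by linarith
  have hB : HasDerivAt (fun s => (n - 1) * s ^ (n - 2) * v s)
      ((n - 1) * ((n - 2) * t ^ (n - 2 - 1)) * v t + (n - 1) * t ^ (n - 2) * w) t :=
    ((Real.hasDerivAt_rpow_const (Or.inl ht.ne')).const_mul (n - 1)).mul hv
  unfold radialFlux
  convert hB.rpow_const (p := n / (n - 1)) (Or.inl (by positivity)) using 1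
  have hexp : n / (n - 1) - 1 = (n - 1)⁻¹ := by field_simp; ring
  have hpow_pred : t ^ (n - 2 - 1) = t ^ (n - 2) / t := Real.rpow_sub_one ht.ne' _
  have hpow_succ : t ^ (n - 1) = t ^ (n - 2) * t := by
    rw [show n - 1 = n - 2 + 1 by ring, Real.rpow_add_one ht.ne']
  have hroot : ((n - 1) * t ^ (n - 2) * v t) ^ (n - 1)⁻¹ = t * ((n - 1) * v t / t) ^ (n - 1)⁻¹ := by
    rw [show (n - 1) * t ^ (n - 2) * v t = t ^ (n - 1) * ((n - 1) * v t / t) by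
        rw [hpow_succ]; field_simp,
      Real.mul_rpow (by positivity) (div_nonneg (mul_nonneg (by linarith) hvt.le) ht.le),
      ← Real.rpow_mul ht.le, mul_inv_cancel₀ hn1, Real.rpow_one]
  rw [hexp, hroot, hpow_pred, hpow_succ]
  field_simp
  ring

theorem radialFlux_inv {n t x : ℝ} (hn : 1 < n) (ht : 0 < t) (hx : 0 ≤ x) :
    t ^ (2 - n) / (n - 1) * radialFlux n t x ^ ((n - 1) / n) = x := by
  have hn1 : 0 < n - 1 := by linarith
  have hcancel : t ^ (2 - n) * t ^ (n - 2) = 1 := by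
    rw [← Real.rpow_add ht, show 2 - n + (n - 2) = 0 by ring, Real.rpow_zero]
  rw [radialFlux, ← Real.rpow_mul (by positivity),
    show n / (n - 1) * ((n - 1) / n) = 1 by field_simp, Real.rpow_one]
  calc t ^ (2 - n) / (n - 1) * ((n - 1) * t ^ (n - 2) * x)
      = t ^ (2 - n) * t ^ (n - 2) * x := by field_simp
    _ = x := by rw [hcancel, one_mul]

theorem integral_eq_sub_of_hasDerivAt_of_mem_Ico {F f : ℝ → ℝ} {a b r : ℝ}
    (hF : ContinuousOn F (Ico a b)) (hderiv : ∀ t ∈ Ioo a b, HasDerivAt F (f t) t)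
    (hf : ContinuousOn f (Ico a b)) (hr : r ∈ Ico a b) :
    ∫ t in a..r, f t = F r - F a := by
  have hsub : Icc a r ⊆ Ico a b := Icc_subset_Ico_right hr.2
  exact integral_eq_sub_of_hasDerivAt_of_le hr.1 (hF.mono hsub)
    (fun t ht => hderiv t ⟨ht.1, ht.2.trans hr.2⟩) ((hf.mono hsub).intervalIntegrable_of_Icc hr.1)

theorem hasDerivAt_derivWithin_Ico {u : ℝ → ℝ} {a b t : ℝ} (hu : DifferentiableOn ℝ u (Ico a b))
    (ht : t ∈ Ioo a b) : HasDerivAt u (derivWithin u (Ico a b) t) t :=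
  (hu t (Ioo_subset_Ico_self ht)).hasDerivWithinAt.hasDerivAt (Ico_mem_nhds ht.1 ht.2)

theorem hasDerivAt_derivWithin_Ico_of_contDiffOn {u : ℝ → ℝ} {a b t : ℝ}
    (hu : ContDiffOn ℝ 2 u (Ico a b)) (ht : t ∈ Ioo a b) :
    HasDerivAt (derivWithin u (Ico a b)) (deriv (deriv u) t) t := by
  have hv := hasDerivAt_derivWithin_Ico
    ((hu.derivWithin (m := 1) (uniqueDiffOn_Ico a b) (by norm_num)).differentiableOn (by norm_num)) ht
  have heq : derivWithin u (Ico a b) =ᶠ[𝓝 t] deriv u :=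
    eventually_of_mem (isOpen_Ioo.mem_nhds ht) fun s hs =>
      derivWithin_of_mem_nhds (Ico_mem_nhds hs.1 hs.2)
  rwa [(hv.congr_of_eventuallyEq heq.symm).deriv]

theorem radial_integrand_eq {n T : ℝ} {v w h : ℝ → ℝ} (hn : 2 ≤ n)
    (hv : ContinuousOn v (Ico 0 T)) (hv0 : v 0 = 0) (hvpos : ∀ t ∈ Ioo 0 T, 0 < v t)
    (hw : ∀ t ∈ Ioo 0 T, HasDerivAt v (w t) t) (hh : ContinuousOn h (Ico 0 T))
    (hode : ∀ t ∈ Ioo 0 T, ((n - 1) * v t / t) ^ (n - 1)⁻¹ * (w t + (n - 2) / t * v t) = h t) :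
    ∀ t ∈ Ico 0 T, t ^ (2 - n) / (n - 1) * (∫ τ in 0..t, n * τ ^ (n - 1) * h τ) ^ ((n - 1) / n)
      = v t := by
  intro t ht
  have hn1 : 1 < n := by linarith
  have hflux : ContinuousOn (fun s => radialFlux n s (v s)) (Ico 0 T) :=
    (((continuous_const.mul (Real.continuous_rpow_const (by linarith))).continuousOn).mul
      hv).rpow_const fun _ _ => Or.inr (by positivity)
  have hintegrand : ContinuousOn (fun s => n * s ^ (n - 1) * h s) (Ico 0 T) :=
    ((continuous_const.mul (Real.continuous_rpow_const (by linarith))).continuousOn).mul hh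
  have hderiv : ∀ s ∈ Ioo 0 T, HasDerivAt (fun s => radialFlux n s (v s)) (n * s ^ (n - 1) * h s) s :=
    fun s hs => by rw [← hode s hs]; exact hasDerivAt_radialFlux hn1 hs.1 (hvpos s hs) (hw s hs)
  have hflux0 : radialFlux n 0 (v 0) = 0 := by
    rw [radialFlux, hv0, mul_zero, Real.zero_rpow (div_pos (by linarith) (by linarith)).ne']
  rw [integral_eq_sub_of_hasDerivAt_of_mem_Ico hflux hderiv hintegrand ht, hflux0, sub_zero]
  rcases ht.1.eq_or_lt with rfl | ht0
  · rw [hflux0, hv0, Real.zero_rpow (div_pos (by linarith) (by linarith)).ne', mul_zero]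
  · exact radialFlux_inv hn1 ht0 (hvpos t ⟨ht0, ht.2⟩).le

end

theorem stmt_3_general (N : ℕ) (hN : 2 ≤ N) (T : ℝ) (hT1 : T ≤ 1)
    (K : ℝ → ℝ) (hKcont : ContinuousOn K (Ico 0 1))
    (f : ℝ → ℝ)
    (hflip : ∀ x > (0:ℝ), ∃ C > (0:ℝ), ∃ ε > (0:ℝ),
      LipschitzOnWith (Real.toNNReal C) f (Metric.ball x ε ∩ Ioi 0))
    (u₀ : ℝ) (hu₀ : 0 < u₀)
    (u : ℝ → ℝ) (hu : ContDiffOn ℝ 2 u (Ico 0 T))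
    (hu0 : u 0 = u₀) (hu'0 : derivWithin u (Ico 0 T) 0 = 0)
    (hu'pos : ∀ r ∈ Ioo (0:ℝ) T, 0 < deriv u r)
    (hode : ∀ r ∈ Ioo (0:ℝ) T,
      ((N - 1) * deriv u r / r) ^ (((N:ℝ) - 1)⁻¹) *
        (deriv (deriv u) r + ((N:ℝ) - 2) / r * deriv u r) = K r * f (u r)) :
    ∀ r ∈ Ico (0:ℝ) T,
      u r = u₀ + ∫ t in (0:ℝ)..r, t ^ ((2:ℝ) - N) / ((N:ℝ) - 1) *
        (∫ τ in (0:ℝ)..t, (N:ℝ) * τ ^ ((N:ℝ) - 1) * K τ * f (u τ)) ^ (((N:ℝ) - 1) / N) := by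
  intro r hr
  set v := derivWithin u (Ico 0 T)
  have hu1 : DifferentiableOn ℝ u (Ico 0 T) := hu.differentiableOn (by norm_num)
  have hvcont : ContinuousOn v (Ico 0 T) :=
    hu.continuousOn_derivWithin (uniqueDiffOn_Ico 0 T) (by norm_num)
  have hv : ∀ t ∈ Ioo 0 T, v t = deriv u t := fun t ht =>
    derivWithin_of_mem_nhds (Ico_mem_nhds ht.1 ht.2)
  have hupos : ∀ t ∈ Ico 0 T, 0 < u t := fun t ht => by
    have hmono := (strictMonoOn_of_deriv_pos (convex_Ico 0 T) hu.continuousOn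
      (by rwa [interior_Ico])).monotoneOn
    exact hu₀.trans_le (hu0 ▸ hmono ⟨le_rfl, ht.1.trans_lt ht.2⟩ ht ht.1)
  have hfcont : ContinuousOn f (Ioi 0) := LocallyLipschitzOn.continuousOn fun x hx => by
    obtain ⟨C, -, ε, hε, hlip⟩ := hflip x hx
    exact ⟨_, _, mem_nhdsWithin.2 ⟨_, Metric.isOpen_ball, Metric.mem_ball_self hε, subset_rfl⟩, hlip⟩
  have hrhs : ContinuousOn (fun τ => K τ * f (u τ)) (Ico 0 T) :=
    (hKcont.mono (Ico_subset_Ico_right hT1)).mul (hfcont.comp hu.continuousOn hupos)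
  have hintegrand := radial_integrand_eq (by exact_mod_cast hN : (2:ℝ) ≤ N) hvcont hu'0
    (fun t ht => hv t ht ▸ hu'pos t ht) (fun t ht => hasDerivAt_derivWithin_Ico_of_contDiffOn hu ht)
    hrhs (fun t ht => by rw [hv t ht]; exact hode t ht)
  simp only [mul_assoc] at hintegrand ⊢
  rw [integral_congr fun t ht => hintegrand t (Icc_subset_Ico_right hr.2 (uIcc_of_le hr.1 ▸ ht)),
    integral_eq_sub_of_hasDerivAt_of_mem_Ico hu.continuousOn
      (fun t ht => hasDerivAt_derivWithin_Ico hu1 ht) hvcont hr, hu0]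
  ring

/-- A positive C² solution of the radial ODE with u(0)=u₀, u'(0)=0 and u'>0 on (0,T)
satisfies the integral equation. -/
theorem stmt_3 (N : ℕ) (hN : 2 ≤ N) (T : ℝ) (hT0 : 0 < T) (hT1 : T ≤ 1)
    (K : ℝ → ℝ) (hKpos : ∀ τ ∈ Ico (0:ℝ) 1, 0 < K τ) (hKcont : ContinuousOn K (Ico 0 1))
    (f : ℝ → ℝ) (hfpos : ∀ s > (0:ℝ), 0 < f s) (hfmono : MonotoneOn f (Ioi 0))
    (hflip : ∀ x > (0:ℝ), ∃ C > (0:ℝ), ∃ ε > (0:ℝ),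
      LipschitzOnWith (Real.toNNReal C) f (Metric.ball x ε ∩ Ioi 0))
    (u₀ : ℝ) (hu₀ : 0 < u₀)
    (u : ℝ → ℝ) (hu : ContDiffOn ℝ 2 u (Ico 0 T))
    (hu0 : u 0 = u₀) (hu'0 : derivWithin u (Ico 0 T) 0 = 0)
    (hu'pos : ∀ r ∈ Ioo (0:ℝ) T, 0 < deriv u r)
    (hode : ∀ r ∈ Ioo (0:ℝ) T,
      ((N - 1) * deriv u r / r) ^ (((N:ℝ) - 1)⁻¹) *
        (deriv (deriv u) r + ((N:ℝ) - 2) / r * deriv u r) = K r * f (u r)) :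
    ∀ r ∈ Ico (0:ℝ) T,
      u r = u₀ + ∫ t in (0:ℝ)..r, t ^ ((2:ℝ) - N) / ((N:ℝ) - 1) *
        (∫ τ in (0:ℝ)..t, (N:ℝ) * τ ^ ((N:ℝ) - 1) * K τ * f (u τ)) ^ (((N:ℝ) - 1) / N) :=
  stmt_3_general N hN T hT1 K hKcont f hflip u₀ hu₀ u hu hu0 hu'0 hu'pos hode
end

section
/- If u : [0,T) → (0,∞) is continuous, positive, and satisfies u(r) = u₀ + ∫₀^r (t^{2−N}/(N−1)) · (∫₀^t N τ^{N−1} K(τ) f(u(τ)) dτ)^{(N−1)/N} dt, then u is C¹ at 0 with u'(0) = 0, i.e., lim_{r→0⁺} (u(r) − u₀)/r = 0. -/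
/-!
Near `0` the continuous function `K · f(u)` is bounded, say by `M`, so the inner integral is at
most `N M t^N`. Its `(N-1)/N`-th power is then `O(t^(N-1))`, which the weight `t^(2-N)` turns into
`O(t)`. Integrating once more gives `u r - u₀ = O(r²)`, hence `(u r - u₀) / r = O(r)`.
-/

open Set Filter Topology intervalIntegral

lemma norm_integral_rpow_weight_le {n M t : ℝ} (hn : 1 ≤ n) (ht : 0 < t) {K F : ℝ → ℝ}
    (hKF : ∀ τ ∈ Ioc 0 t, ‖K τ * F τ‖ ≤ M) :
    ‖∫ τ in (0:ℝ)..t, n * τ ^ (n - 1) * K τ * F τ‖ ≤ n * M * t ^ n := by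
  have hbound : ∀ τ ∈ uIoc 0 t, ‖n * τ ^ (n - 1) * K τ * F τ‖ ≤ n * t ^ (n - 1) * M := by
    intro τ hτ
    rw [uIoc_of_le ht.le] at hτ
    have hτ0 : 0 ≤ τ := hτ.1.le
    rw [mul_assoc, norm_mul, Real.norm_of_nonneg (by positivity)]
    gcongr
    · exact hτ.2
    · exact hKF τ hτ
  calc ‖∫ τ in (0:ℝ)..t, n * τ ^ (n - 1) * K τ * F τ‖
      ≤ n * t ^ (n - 1) * M * |t - 0| := norm_integral_le_of_norm_le_const hbound
    _ = n * M * (t ^ (n - 1) * t) := by rw [sub_zero, abs_of_pos ht]; ring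
    _ = n * M * t ^ n := by rw [← Real.rpow_add_one ht.ne']; norm_num

lemma norm_rpow_two_sub_mul_rpow_le {n B t I : ℝ} (hn : 1 ≤ n) (hB : 0 ≤ B) (ht : 0 < t)
    (hI : ‖I‖ ≤ B * t ^ n) :
    ‖t ^ (2 - n) / (n - 1) * I ^ ((n - 1) / n)‖ ≤ B ^ ((n - 1) / n) / (n - 1) * t := by
  have hp : 0 ≤ (n - 1) / n := div_nonneg (by linarith) (by linarith)
  have hpow : ‖I ^ ((n - 1) / n)‖ ≤ B ^ ((n - 1) / n) * t ^ (n - 1) :=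
    calc ‖I ^ ((n - 1) / n)‖ ≤ ‖I‖ ^ ((n - 1) / n) := by
          simpa only [Real.norm_eq_abs] using Real.abs_rpow_le_abs_rpow I _
      _ ≤ (B * t ^ n) ^ ((n - 1) / n) := Real.rpow_le_rpow (norm_nonneg _) hI hp
      _ = B ^ ((n - 1) / n) * t ^ (n - 1) := by
          rw [Real.mul_rpow hB (by positivity), ← Real.rpow_mul ht.le,
            mul_div_cancel₀ _ (by linarith)]
  have hweight : 0 ≤ t ^ (2 - n) / (n - 1) := div_nonneg (by positivity) (by linarith)
  calc ‖t ^ (2 - n) / (n - 1) * I ^ ((n - 1) / n)‖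
      ≤ t ^ (2 - n) / (n - 1) * (B ^ ((n - 1) / n) * t ^ (n - 1)) := by
        rw [norm_mul, Real.norm_of_nonneg hweight]
        exact mul_le_mul_of_nonneg_left hpow hweight
    _ = B ^ ((n - 1) / n) / (n - 1) * (t ^ (2 - n) * t ^ (n - 1)) := by ring
    _ = B ^ ((n - 1) / n) / (n - 1) * t := by rw [← Real.rpow_add ht]; norm_num

lemma tendsto_integral_div_nhdsGT_zero {g : ℝ → ℝ} {C δ : ℝ} (hδ : 0 < δ)
    (hg : ∀ t ∈ Ioc 0 δ, ‖g t‖ ≤ C * t) :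
    Tendsto (fun r => (∫ t in (0:ℝ)..r, g t) / r) (𝓝[>] 0) (𝓝 0) := by
  have hC : 0 ≤ C := nonneg_of_mul_nonneg_left ((norm_nonneg _).trans (hg δ ⟨hδ, le_rfl⟩)) hδ
  have hbound : ∀ r ∈ Ioc 0 δ, ‖(∫ t in (0:ℝ)..r, g t) / r‖ ≤ C * r := by
    intro r hr
    have hgr : ∀ t ∈ uIoc 0 r, ‖g t‖ ≤ C * r := by
      intro t ht
      rw [uIoc_of_le hr.1.le] at ht
      exact (hg t ⟨ht.1, ht.2.trans hr.2⟩).trans (by gcongr; exact ht.2)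
    have hint := norm_integral_le_of_norm_le_const hgr
    rw [sub_zero, abs_of_pos hr.1] at hint
    rw [norm_div, Real.norm_of_nonneg hr.1.le, div_le_iff₀ hr.1]
    exact hint
  have hlim : Tendsto (fun r : ℝ => C * r) (𝓝[>] 0) (𝓝 0) := by
    simpa using ((continuous_const_mul C).tendsto 0).mono_left nhdsWithin_le_nhds
  exact squeeze_zero_norm' (mem_of_superset (Ioc_mem_nhdsGT hδ) hbound) hlim

theorem stmt_5_general (N : ℕ) (hN : 2 ≤ N) (T : ℝ) (hT0 : 0 < T) (hT1 : T ≤ 1)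
    (K : ℝ → ℝ) (hKcont : ContinuousOn K (Ico 0 1))
    (f : ℝ → ℝ) (hfcont : ContinuousOn f (Ioi 0))
    (u₀ : ℝ)
    (u : ℝ → ℝ) (hucont : ContinuousOn u (Ico 0 T)) (hupos : ∀ r ∈ Ico (0:ℝ) T, 0 < u r)
    (hie : ∀ r ∈ Ico (0:ℝ) T,
      u r = u₀ + ∫ t in (0:ℝ)..r, t ^ ((2:ℝ) - N) / ((N:ℝ) - 1) *
        (∫ τ in (0:ℝ)..t, (N:ℝ) * τ ^ ((N:ℝ) - 1) * K τ * f (u τ)) ^ (((N:ℝ) - 1) / N)) :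
    Tendsto (fun r => (u r - u₀) / r) (𝓝[>] 0) (𝓝 0) := by
  have hN1 : (1:ℝ) ≤ N := by exact_mod_cast (by omega : 1 ≤ N)
  have hsubT : Icc 0 (T / 2) ⊆ Ico 0 T := Icc_subset_Ico_right (by linarith)
  have hsub1 : Icc 0 (T / 2) ⊆ Ico 0 1 := Icc_subset_Ico_right (by linarith)
  have hKfu : ContinuousOn (fun τ => K τ * f (u τ)) (Icc 0 (T / 2)) :=
    (hKcont.mono hsub1).mul <|
      hfcont.comp (hucont.mono hsubT) fun τ hτ => hupos τ (hsubT hτ)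
  obtain ⟨M, hM⟩ := isCompact_Icc.exists_bound_of_continuousOn hKfu
  have hM0 : 0 ≤ M := (norm_nonneg _).trans (hM 0 ⟨le_rfl, by linarith⟩)
  have hdiff : ∀ᶠ r in 𝓝[>] 0, (∫ t in (0:ℝ)..r, t ^ ((2:ℝ) - N) / ((N:ℝ) - 1) *
      (∫ τ in (0:ℝ)..t, (N:ℝ) * τ ^ ((N:ℝ) - 1) * K τ * f (u τ)) ^ (((N:ℝ) - 1) / N)) / r =
      (u r - u₀) / r := by
    filter_upwards [Ioo_mem_nhdsGT hT0] with r hr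
    rw [hie r ⟨hr.1.le, hr.2⟩, add_sub_cancel_left]
  refine Tendsto.congr' hdiff <| tendsto_integral_div_nhdsGT_zero
    (C := ((N:ℝ) * M) ^ (((N:ℝ) - 1) / N) / ((N:ℝ) - 1)) (half_pos hT0) fun t ht => ?_
  refine norm_rpow_two_sub_mul_rpow_le hN1 (by positivity) ht.1 ?_
  exact norm_integral_rpow_weight_le hN1 ht.1 fun τ hτ => hM τ ⟨hτ.1.le, hτ.2.trans ht.2⟩

/-- A continuous positive solution of the integral equation satisfies
lim_{r→0⁺} (u(r) − u₀)/r = 0, i.e. u'(0) = 0 from the right. -/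
theorem stmt_5 (N : ℕ) (hN : 2 ≤ N) (T : ℝ) (hT0 : 0 < T) (hT1 : T ≤ 1)
    (K : ℝ → ℝ) (hKpos : ∀ τ ∈ Ico (0:ℝ) 1, 0 < K τ) (hKcont : ContinuousOn K (Ico 0 1))
    (f : ℝ → ℝ) (hfpos : ∀ s > (0:ℝ), 0 < f s) (hfcont : ContinuousOn f (Ioi 0))
    (u₀ : ℝ) (hu₀ : 0 < u₀)
    (u : ℝ → ℝ) (hucont : ContinuousOn u (Ico 0 T)) (hupos : ∀ r ∈ Ico (0:ℝ) T, 0 < u r)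
    (hie : ∀ r ∈ Ico (0:ℝ) T,
      u r = u₀ + ∫ t in (0:ℝ)..r, t ^ ((2:ℝ) - N) / ((N:ℝ) - 1) *
        (∫ τ in (0:ℝ)..t, (N:ℝ) * τ ^ ((N:ℝ) - 1) * K τ * f (u τ)) ^ (((N:ℝ) - 1) / N)) :
    Tendsto (fun r => (u r - u₀) / r) (𝓝[>] 0) (𝓝 0) :=
  stmt_5_general N hN T hT0 hT1 K hKcont f hfcont u₀ u hucont hupos hie
end

section
/- If u : [0,T) → (0,∞) is continuous and satisfies u(r) = u₀ + ∫₀^r (t^{2−N}/(N−1)) · (∫₀^t N τ^{N−1} K(τ) f(u(τ)) dτ)^{(N−1)/N} dt, then the second derivative of u at 0 (from the right) exists and equals (1/(N−1))·(K(0)f(u₀))^{(N−1)/N}; i.e., lim_{r→0⁺} u'(r)/r = (1/(N−1))·(K(0)f(u₀))^{(N−1)/N} where u'(r) = (r^{2−N}/(N−1))·(∫₀^r Nτ^{N−1}K(τ)f(u(τ))dτ)^{(N−1)/N}. -/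
open Set Filter Topology intervalIntegral

/-!
Write `F(r) = ∫₀^r N τ^{N-1} K(τ) f(u(τ)) dτ`. Then `u'(r) / r = (1/(N-1)) (F(r) / r^N)^{(N-1)/N}`,
and by L'Hôpital's rule `F(r) / r^N` tends to `K(0) f(u(0)) = K(0) f(u₀)`, since `F'(r)` and
`(r^N)'` differ exactly by the continuous factor `K(r) f(u(r))`.
-/

theorem tendsto_integral_nhdsGT {φ : ℝ → ℝ} {a b : ℝ} (hab : a < b)
    (hφ : IntervalIntegrable φ MeasureTheory.volume a b) :
    Tendsto (fun r => ∫ τ in a..r, φ τ) (𝓝[>] a) (𝓝 0) := by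
  have hcont := continuousOn_primitive_interval' hφ left_mem_uIcc a left_mem_uIcc
  have hIcc : uIcc a b ∈ 𝓝[>] a := by
    rw [uIcc_of_le hab.le]; exact Icc_mem_nhdsGT hab
  simpa using (hcont.mono_of_mem_nhdsWithin hIcc).tendsto

theorem tendsto_integral_mul_rpow_div_rpow {a m : ℝ} (ha : 0 < a) (hm : 0 < m) {φ : ℝ → ℝ}
    (hφ : ContinuousOn φ (Ico 0 m)) :
    Tendsto (fun r => (∫ τ in (0:ℝ)..r, a * τ ^ (a - 1) * φ τ) / r ^ a) (𝓝[>] 0)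
      (𝓝 (φ 0)) := by
  have hint : ∀ r ∈ Ioo 0 m, IntervalIntegrable (fun τ => a * τ ^ (a - 1) * φ τ)
      MeasureTheory.volume 0 r := fun r hr =>
    ((intervalIntegrable_rpow' (by linarith)).const_mul a).mul_continuousOn
      (hφ.mono (by rw [uIcc_of_le hr.1.le]; exact Icc_subset_Ico_right hr.2))
  have hcont : ContinuousOn (fun τ => a * τ ^ (a - 1) * φ τ) (Ioo 0 m) :=
    ((continuousOn_const.mul (continuousOn_id.rpow_const fun τ hτ => Or.inl hτ.1.ne')).mul
      (hφ.mono Ioo_subset_Ico_self))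
  refine HasDerivAt.lhopital_zero_right_on_Ioo hm
    (fun r hr => integral_hasDerivAt_right (hint r hr)
      (hcont.stronglyMeasurableAtFilter isOpen_Ioo r hr)
      (hcont.continuousAt (Ioo_mem_nhds hr.1 hr.2)))
    (fun r hr => Real.hasDerivAt_rpow_const (Or.inl hr.1.ne'))
    (fun r hr => by have := hr.1; positivity)
    (tendsto_integral_nhdsGT (half_pos hm) (hint _ ⟨half_pos hm, half_lt_self hm⟩)) ?_ ?_
  · simpa [Real.zero_rpow ha.ne'] using
      (Real.continuousAt_rpow_const 0 a (Or.inr ha.le)).tendsto.mono_left nhdsWithin_le_nhds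
  · have hφ0 : Tendsto φ (𝓝[>] 0) (𝓝 (φ 0)) :=
      ((hφ 0 ⟨le_rfl, hm⟩).mono_of_mem_nhdsWithin (Ico_mem_nhdsGT hm)).tendsto
    refine hφ0.congr' ?_
    filter_upwards [self_mem_nhdsWithin] with r (hr : 0 < r)
    have : a * r ^ (a - 1) ≠ 0 := by positivity
    field_simp

theorem rpow_two_sub_div_mul_rpow_div_self {n r g : ℝ} (hn : n ≠ 0) (hr : 0 < r) (hg : 0 ≤ g) :
    r ^ (2 - n) / (n - 1) * g ^ ((n - 1) / n) / r = 1 / (n - 1) * (g / r ^ n) ^ ((n - 1) / n) := by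
  have hpow : (r ^ n) ^ ((n - 1) / n) = r ^ (n - 1) := by
    rw [← Real.rpow_mul hr.le, mul_div_cancel₀ _ hn]
  have hr2 : r ^ (2 - n) = r / r ^ (n - 1) := by
    rw [eq_div_iff (by positivity), ← Real.rpow_add hr]; norm_num
  rw [Real.div_rpow hg (by positivity), hpow, hr2]
  have : r ^ (n - 1) ≠ 0 := by positivity
  field_simp

theorem stmt_6_general (N : ℕ) (hN : 2 ≤ N) (T : ℝ) (hT0 : 0 < T)
    (K : ℝ → ℝ) (hKpos : ∀ τ ∈ Ico (0:ℝ) 1, 0 < K τ) (hKcont : ContinuousOn K (Ico 0 1))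
    (f : ℝ → ℝ) (hfpos : ∀ s > (0:ℝ), 0 < f s) (hfcont : ContinuousOn f (Ioi 0))
    (u₀ : ℝ)
    (u : ℝ → ℝ) (hucont : ContinuousOn u (Ico 0 T)) (hupos : ∀ r ∈ Ico (0:ℝ) T, 0 < u r)
    (hie : ∀ r ∈ Ico (0:ℝ) T,
      u r = u₀ + ∫ t in (0:ℝ)..r, t ^ ((2:ℝ) - N) / ((N:ℝ) - 1) *
        (∫ τ in (0:ℝ)..t, (N:ℝ) * τ ^ ((N:ℝ) - 1) * K τ * f (u τ)) ^ (((N:ℝ) - 1) / N)) :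
    Tendsto (fun r => (r ^ ((2:ℝ) - N) / ((N:ℝ) - 1) *
        (∫ τ in (0:ℝ)..r, (N:ℝ) * τ ^ ((N:ℝ) - 1) * K τ * f (u τ)) ^ (((N:ℝ) - 1) / N)) / r)
      (𝓝[>] 0) (𝓝 (1 / ((N:ℝ) - 1) * (K 0 * f u₀) ^ (((N:ℝ) - 1) / N))) := by
  have hN1 : (1:ℝ) < N := by exact_mod_cast hN
  have hu0 : u 0 = u₀ := by simpa using hie 0 ⟨le_rfl, hT0⟩
  have hm : 0 < min T 1 := lt_min hT0 one_pos
  have hmT : Ico 0 (min T 1) ⊆ Ico 0 T := Ico_subset_Ico_right (min_le_left _ _)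
  have hm1 : Ico 0 (min T 1) ⊆ Ico 0 1 := Ico_subset_Ico_right (min_le_right _ _)
  have hφ : ContinuousOn (fun τ => K τ * f (u τ)) (Ico 0 (min T 1)) :=
    (hKcont.mono hm1).mul (hfcont.comp (hucont.mono hmT) fun τ hτ => hupos τ (hmT hτ))
  have hmean := ((tendsto_integral_mul_rpow_div_rpow (a := N) (by linarith) hm hφ).rpow_const
    (p := ((N:ℝ) - 1) / N) (Or.inr (by positivity))).const_mul (1 / ((N:ℝ) - 1))
  rw [hu0] at hmean
  refine hmean.congr' ?_
  filter_upwards [Ioo_mem_nhdsGT hm] with r hr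
  have hF : 0 ≤ ∫ τ in (0:ℝ)..r, (N:ℝ) * τ ^ ((N:ℝ) - 1) * K τ * f (u τ) := by
    refine integral_nonneg hr.1.le fun τ hτ => ?_
    have hτm : τ ∈ Ico 0 (min T 1) := ⟨hτ.1, hτ.2.trans_lt hr.2⟩
    have := hKpos τ (hm1 hτm)
    have := hfpos _ (hupos τ (hmT hτm))
    have := hτ.1
    positivity
  rw [rpow_two_sub_div_mul_rpow_div_self (by positivity) hr.1 hF]
  simp only [mul_assoc]

/-- For a continuous solution of the integral equation,
lim_{r→0⁺} u'(r)/r = (1/(N−1))·(K(0)f(u₀))^{(N−1)/N}, where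
u'(r) = (r^{2−N}/(N−1))·(∫₀^r Nτ^{N−1}K(τ)f(u(τ))dτ)^{(N−1)/N}. -/
theorem stmt_6 (N : ℕ) (hN : 2 ≤ N) (T : ℝ) (hT0 : 0 < T) (hT1 : T ≤ 1)
    (K : ℝ → ℝ) (hKpos : ∀ τ ∈ Ico (0:ℝ) 1, 0 < K τ) (hKcont : ContinuousOn K (Ico 0 1))
    (f : ℝ → ℝ) (hfpos : ∀ s > (0:ℝ), 0 < f s) (hfcont : ContinuousOn f (Ioi 0))
    (u₀ : ℝ) (hu₀ : 0 < u₀)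
    (u : ℝ → ℝ) (hucont : ContinuousOn u (Ico 0 T)) (hupos : ∀ r ∈ Ico (0:ℝ) T, 0 < u r)
    (hie : ∀ r ∈ Ico (0:ℝ) T,
      u r = u₀ + ∫ t in (0:ℝ)..r, t ^ ((2:ℝ) - N) / ((N:ℝ) - 1) *
        (∫ τ in (0:ℝ)..t, (N:ℝ) * τ ^ ((N:ℝ) - 1) * K τ * f (u τ)) ^ (((N:ℝ) - 1) / N)) :
    Tendsto (fun r => (r ^ ((2:ℝ) - N) / ((N:ℝ) - 1) *
        (∫ τ in (0:ℝ)..r, (N:ℝ) * τ ^ ((N:ℝ) - 1) * K τ * f (u τ)) ^ (((N:ℝ) - 1) / N)) / r)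
      (𝓝[>] 0) (𝓝 (1 / ((N:ℝ) - 1) * (K 0 * f u₀) ^ (((N:ℝ) - 1) / N))) :=
  stmt_6_general N hN T hT0 K hKpos hKcont f hfpos hfcont u₀ u hucont hupos hie
end

section
/- Comparison principle (integral form): Let K : [0,1) → (0,∞) be continuous and f : (0,∞) → (0,∞) nondecreasing. Suppose u₁, u₂ : [0,T) → (0,∞) are continuous with u₁(0) < u₂(0), and for all r ∈ [0,T): u₁(r) ≤ u₁(0) + ∫₀^r (t^{2−N}/(N−1)) (∫₀^t Nτ^{N−1} K(τ) f(u₁(τ)) dτ)^{(N−1)/N} dt and u₂(r) ≥ u₂(0) + ∫₀^r (t^{2−N}/(N−1)) (∫₀^t Nτ^{N−1} K(τ) f(u₂(τ)) dτ)^{(N−1)/N} dt. Then u₁(r) < u₂(r) for all r ∈ [0,T). -/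
open Set Filter Topology intervalIntegral

/-!
Let `r₀` be the first point of `[0, r]` at which `u₂ ≤ u₁`. On `[0, r₀)` we have `u₁ < u₂`, so
by monotonicity of `f` the densities `N τ^(N-1) K(τ) f(uᵢ(τ))` are ordered, hence so are their
primitives, the outer integrands and the outer integrals over `[0, r₀]`. Then
`u₁ r₀ ≤ u₁ 0 + I₁ < u₂ 0 + I₂ ≤ u₂ r₀`, contradicting `u₂ r₀ ≤ u₁ r₀`.

The analytic content is that `I₂` is a genuine integral rather than the junk value `0`: the
density of `u₂` is at most `N c τ^(N-1)`, so its primitive is at most `c t^N` and the outer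
integrand is at most `c^((N-1)/N) t / (N-1)`.
-/

open MeasureTheory

theorem exists_first_crossing {a b : ℝ} {g₁ g₂ : ℝ → ℝ} (hab : a ≤ b)
    (hg₁ : ContinuousOn g₁ (Icc a b)) (hg₂ : ContinuousOn g₂ (Icc a b)) (hb : g₂ b ≤ g₁ b) :
    ∃ c ∈ Icc a b, g₂ c ≤ g₁ c ∧ ∀ s ∈ Ico a c, g₁ s < g₂ s := by
  set S := Icc a b ∩ (g₂ - g₁) ⁻¹' Iic 0
  have hS : IsCompact S := isCompact_Icc.of_isClosed_subset
    ((hg₂.sub hg₁).preimage_isClosed_of_isClosed isClosed_Icc isClosed_Iic) inter_subset_left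
  obtain ⟨c, ⟨hc, hcS⟩, hleast⟩ :=
    hS.exists_isLeast ⟨b, ⟨hab, le_rfl⟩, by simpa using hb⟩
  refine ⟨c, hc, by simpa using hcS, fun s hs => ?_⟩
  by_contra! hle
  have : c ≤ s := hleast ⟨⟨hs.1, hs.2.le.trans hc.2⟩, by simpa using hle⟩
  exact hs.2.not_ge this

theorem MonotoneOn.aemeasurable_comp {f u : ℝ → ℝ} {s t : Set ℝ} {μ : Measure ℝ}
    (hf : MonotoneOn f s) (hu : ContinuousOn u t) (hut : MapsTo u t s) (ht : MeasurableSet t) :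
    AEMeasurable (fun x => f (u x)) (μ.restrict t) := by
  have hf' : Monotone (s.domRestrict f) := fun x y hxy => hf x.2 y.2 hxy
  exact aemeasurable_restrict_of_measurable_subtype ht
    (hf'.measurable.comp (hu.mapsToRestrict hut).measurable)

theorem MonotoneOn.exists_bound_comp {f u : ℝ → ℝ} {s : Set ℝ} {a b : ℝ}
    (hf : MonotoneOn f s) (hu : ContinuousOn u (Icc a b)) (hus : MapsTo u (Icc a b) s) :
    ∃ C, ∀ x ∈ Icc a b, |f (u x)| ≤ C := by
  rcases (Icc a b).eq_empty_or_nonempty with hempty | hne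
  · exact ⟨0, by simp [hempty]⟩
  obtain ⟨m, hm, hmin⟩ := isCompact_Icc.exists_isMinOn hne hu
  obtain ⟨M, hM, hmax⟩ := isCompact_Icc.exists_isMaxOn hne hu
  exact ⟨max |f (u m)| |f (u M)|, fun x hx => abs_le_max_abs_abs
    (hf (hus hm) (hus hx) (hmin hx)) (hf (hus hx) (hus hM) (hmax hx))⟩

theorem MonotoneOn.integrableOn_comp {f u : ℝ → ℝ} {s : Set ℝ} {a b : ℝ}
    (hf : MonotoneOn f s) (hu : ContinuousOn u (Icc a b)) (hus : MapsTo u (Icc a b) s) :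
    IntegrableOn (fun x => f (u x)) (Icc a b) := by
  obtain ⟨C, hC⟩ := hf.exists_bound_comp hu hus
  exact ⟨(hf.aemeasurable_comp hu hus measurableSet_Icc).aestronglyMeasurable,
    .restrict_of_bounded (C := C) measure_Icc_lt_top
      (ae_restrict_of_forall_mem measurableSet_Icc hC)⟩

theorem integrableOn_density {n r : ℝ} {K f u : ℝ → ℝ} {s : Set ℝ} (hn : 1 ≤ n)
    (hK : ContinuousOn K (Icc 0 r)) (hf : MonotoneOn f s) (hu : ContinuousOn u (Icc 0 r))
    (hus : MapsTo u (Icc 0 r) s) :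
    IntegrableOn (fun τ => n * τ ^ (n - 1) * K τ * f (u τ)) (Icc 0 r) :=
  (hf.integrableOn_comp hu hus).continuousOn_mul
    ((continuousOn_const.mul (continuousOn_id.rpow_const fun _ _ => Or.inr (by linarith))).mul hK)
    isCompact_Icc

theorem exists_density_le {n r : ℝ} {K f u : ℝ → ℝ} {s : Set ℝ} (hn : 0 ≤ n)
    (hK : ContinuousOn K (Icc 0 r)) (hf : MonotoneOn f s) (hu : ContinuousOn u (Icc 0 r))
    (hus : MapsTo u (Icc 0 r) s) :
    ∃ c, 0 ≤ c ∧ ∀ τ ∈ Icc 0 r, n * τ ^ (n - 1) * K τ * f (u τ) ≤ n * c * τ ^ (n - 1) := by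
  obtain ⟨A, hA⟩ := isCompact_Icc.exists_bound_of_continuousOn hK
  obtain ⟨B, hB⟩ := hf.exists_bound_comp hu hus
  refine ⟨max (A * B) 0, le_max_right _ _, fun τ hτ => ?_⟩
  have hKf : K τ * f (u τ) ≤ max (A * B) 0 := le_max_of_le_left <| calc
    K τ * f (u τ) ≤ |K τ| * |f (u τ)| := by rw [← abs_mul]; exact le_abs_self _
    _ ≤ A * B := mul_le_mul (hA τ hτ) (hB τ hτ) (abs_nonneg _) ((norm_nonneg _).trans (hA τ hτ))
  have hw : 0 ≤ n * τ ^ (n - 1) := mul_nonneg hn (Real.rpow_nonneg hτ.1 _)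
  calc n * τ ^ (n - 1) * K τ * f (u τ) = n * τ ^ (n - 1) * (K τ * f (u τ)) := by ring
    _ ≤ n * τ ^ (n - 1) * max (A * B) 0 := mul_le_mul_of_nonneg_left hKf hw
    _ = n * max (A * B) 0 * τ ^ (n - 1) := by ring

noncomputable def radialIntegrand (n : ℝ) (h : ℝ → ℝ) (t : ℝ) : ℝ :=
  t ^ (2 - n) / (n - 1) * (∫ τ in (0:ℝ)..t, h τ) ^ ((n - 1) / n)

theorem integral_le_mul_rpow {n c t : ℝ} {h : ℝ → ℝ} (hn : 0 < n) (ht : 0 ≤ t)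
    (hint : IntervalIntegrable h volume 0 t) (hle : ∀ τ ∈ Icc 0 t, h τ ≤ n * c * τ ^ (n - 1)) :
    ∫ τ in (0:ℝ)..t, h τ ≤ c * t ^ n := by
  have hpow : IntervalIntegrable (fun τ => n * c * τ ^ (n - 1)) volume 0 t :=
    (intervalIntegral.intervalIntegrable_rpow' (by linarith)).const_mul (n * c)
  calc ∫ τ in (0:ℝ)..t, h τ ≤ ∫ τ in (0:ℝ)..t, n * c * τ ^ (n - 1) :=
        integral_mono_on ht hint hpow hle
    _ = c * t ^ n := by
        rw [intervalIntegral.integral_const_mul, integral_rpow (Or.inl (by linarith)),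
          sub_add_cancel, Real.zero_rpow hn.ne']
        field_simp
        ring

theorem radialIntegrand_nonneg {n t : ℝ} {h : ℝ → ℝ} (hn : 1 < n) (ht : 0 ≤ t)
    (hJ : 0 ≤ ∫ τ in (0:ℝ)..t, h τ) : 0 ≤ radialIntegrand n h t :=
  mul_nonneg (div_nonneg (Real.rpow_nonneg ht _) (by linarith)) (Real.rpow_nonneg hJ _)

theorem radialIntegrand_le {n c t : ℝ} {h : ℝ → ℝ} (hn : 1 < n) (ht : 0 ≤ t)
    (hJ0 : 0 ≤ ∫ τ in (0:ℝ)..t, h τ) (hJ : ∫ τ in (0:ℝ)..t, h τ ≤ c * t ^ n) :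
    radialIntegrand n h t ≤ c ^ ((n - 1) / n) * t / (n - 1) := by
  rcases ht.eq_or_lt with rfl | ht
  · simp [radialIntegrand, Real.zero_rpow (by positivity : (n - 1) / n ≠ 0)]
  have hc : 0 ≤ c := nonneg_of_mul_nonneg_left (hJ0.trans hJ) (by positivity)
  have hq : 0 ≤ (n - 1) / n := div_nonneg (by linarith) (by linarith)
  have hn1 : n - 1 ≠ 0 := by linarith
  calc radialIntegrand n h t ≤ t ^ (2 - n) / (n - 1) * (c * t ^ n) ^ ((n - 1) / n) :=
        mul_le_mul_of_nonneg_left (Real.rpow_le_rpow hJ0 hJ hq)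
          (div_nonneg (by positivity) (by linarith))
    _ = c ^ ((n - 1) / n) * t / (n - 1) := by
        rw [Real.mul_rpow hc (by positivity), ← Real.rpow_mul ht.le,
          mul_div_cancel₀ _ (by linarith : n ≠ 0)]
        have : t ^ (2 - n) * t ^ (n - 1) = t := by
          rw [← Real.rpow_add ht]; norm_num
        field_simp
        linear_combination c ^ ((n - 1) / n) * this

theorem intervalIntegrable_radialIntegrand {n c r : ℝ} {h : ℝ → ℝ} (hn : 1 < n) (hc : 0 ≤ c)
    (hr : 0 ≤ r) (hint : IntegrableOn h (Icc 0 r)) (h0 : ∀ τ ∈ Icc 0 r, 0 ≤ h τ)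
    (hle : ∀ τ ∈ Icc 0 r, h τ ≤ n * c * τ ^ (n - 1)) :
    IntervalIntegrable (radialIntegrand n h) volume 0 r := by
  have hJ0 : ∀ t ∈ Icc 0 r, 0 ≤ ∫ τ in (0:ℝ)..t, h τ := fun t ht =>
    integral_nonneg ht.1 fun τ hτ => h0 τ ⟨hτ.1, hτ.2.trans ht.2⟩
  have hJ : ∀ t ∈ Icc 0 r, ∫ τ in (0:ℝ)..t, h τ ≤ c * t ^ n := fun t ht =>
    integral_le_mul_rpow (by linarith) ht.1
      ((intervalIntegrable_iff_integrableOn_Icc_of_le ht.1).2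
        (hint.mono_set (Icc_subset_Icc_right ht.2)))
      fun τ hτ => hle τ ⟨hτ.1, hτ.2.trans ht.2⟩
  have hprim : ContinuousOn (fun t => ∫ τ in (0:ℝ)..t, h τ) (Icc 0 r) := by
    simpa [uIcc_of_le hr] using continuousOn_primitive_interval (μ := volume) (a := 0) (b := r)
      (by rwa [uIcc_of_le hr])
  have hmeas : AEStronglyMeasurable (radialIntegrand n h) (volume.restrict (Icc 0 r)) :=
    (((measurable_id.pow_const _).div_const _).aestronglyMeasurable).mul
      ((hprim.rpow_const fun _ _ => Or.inr (div_nonneg (by linarith) (by linarith)))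
        |>.aestronglyMeasurable measurableSet_Icc)
  refine (intervalIntegrable_iff_integrableOn_Icc_of_le hr).2
    ⟨hmeas, .restrict_of_bounded (C := c ^ ((n - 1) / n) * r / (n - 1)) measure_Icc_lt_top
      (ae_restrict_of_forall_mem measurableSet_Icc fun t ht => ?_)⟩
  rw [Real.norm_eq_abs, abs_of_nonneg (radialIntegrand_nonneg hn ht.1 (hJ0 t ht))]
  refine (radialIntegrand_le hn ht.1 (hJ0 t ht) (hJ t ht)).trans ?_
  gcongr
  exact ht.2

theorem integral_radialIntegrand_mono {n r : ℝ} {h₁ h₂ : ℝ → ℝ} (hn : 1 < n) (hr : 0 ≤ r)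
    (h₁0 : ∀ τ ∈ Icc 0 r, 0 ≤ h₁ τ) (h₁₂ : ∀ τ ∈ Ioo 0 r, h₁ τ ≤ h₂ τ)
    (h₂int : IntegrableOn h₂ (Icc 0 r))
    (hI₂int : IntervalIntegrable (radialIntegrand n h₂) volume 0 r) :
    ∫ t in (0:ℝ)..r, radialIntegrand n h₁ t ≤ ∫ t in (0:ℝ)..r, radialIntegrand n h₂ t := by
  have hJ0 : ∀ t ∈ Icc 0 r, 0 ≤ ∫ τ in (0:ℝ)..t, h₁ τ := fun t ht =>
    integral_nonneg ht.1 fun τ hτ => h₁0 τ ⟨hτ.1, hτ.2.trans ht.2⟩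
  have hJ : ∀ t ∈ Icc 0 r, ∫ τ in (0:ℝ)..t, h₁ τ ≤ ∫ τ in (0:ℝ)..t, h₂ τ := by
    intro t ht
    simp only [integral_of_le ht.1, integral_Ioc_eq_integral_Ioo]
    exact setIntegral_mono_of_nonneg (fun τ hτ => h₁0 τ ⟨hτ.1.le, hτ.2.le.trans ht.2⟩)
      (fun τ hτ => h₁₂ τ ⟨hτ.1, hτ.2.trans_le ht.2⟩)
      (h₂int.mono_set (Ioo_subset_Icc_self.trans (Icc_subset_Icc_right ht.2)))
  rw [integral_of_le hr, integral_of_le hr]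
  refine setIntegral_mono_of_nonneg
    (fun t ht => radialIntegrand_nonneg hn ht.1.le (hJ0 t (Ioc_subset_Icc_self ht)))
    (fun t ht => ?_) hI₂int.1
  exact mul_le_mul_of_nonneg_left
    (Real.rpow_le_rpow (hJ0 t (Ioc_subset_Icc_self ht)) (hJ t (Ioc_subset_Icc_self ht))
      (div_nonneg (by linarith) (by linarith)))
    (div_nonneg (Real.rpow_nonneg ht.1.le _) (by linarith))

theorem integral_radialIntegrand_density_mono {n r : ℝ} {K f u₁ u₂ : ℝ → ℝ} {s : Set ℝ}
    (hn : 1 < n) (hr : 0 ≤ r) (hK : ContinuousOn K (Icc 0 r)) (hK0 : ∀ τ ∈ Icc 0 r, 0 ≤ K τ)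
    (hf : MonotoneOn f s) (hf0 : ∀ x ∈ s, 0 ≤ f x) (hu₁ : MapsTo u₁ (Icc 0 r) s)
    (hu₂ : ContinuousOn u₂ (Icc 0 r)) (hu₂s : MapsTo u₂ (Icc 0 r) s)
    (hu : ∀ τ ∈ Ioo 0 r, u₁ τ ≤ u₂ τ) :
    ∫ t in (0:ℝ)..r, radialIntegrand n (fun τ => n * τ ^ (n - 1) * K τ * f (u₁ τ)) t ≤
      ∫ t in (0:ℝ)..r, radialIntegrand n (fun τ => n * τ ^ (n - 1) * K τ * f (u₂ τ)) t := by
  have hweight : ∀ τ ∈ Icc 0 r, 0 ≤ n * τ ^ (n - 1) * K τ := fun τ hτ =>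
    mul_nonneg (mul_nonneg (by linarith) (Real.rpow_nonneg hτ.1 _)) (hK0 τ hτ)
  have hint₂ := integrableOn_density hn.le hK hf hu₂ hu₂s
  obtain ⟨c, hc, hbound₂⟩ := exists_density_le (n := n) (by linarith) hK hf hu₂ hu₂s
  refine integral_radialIntegrand_mono hn hr
    (fun τ hτ => mul_nonneg (hweight τ hτ) (hf0 _ (hu₁ hτ)))
    (fun τ hτ => mul_le_mul_of_nonneg_left
      (hf (hu₁ (Ioo_subset_Icc_self hτ)) (hu₂s (Ioo_subset_Icc_self hτ)) (hu τ hτ))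
      (hweight τ (Ioo_subset_Icc_self hτ)))
    hint₂ (intervalIntegrable_radialIntegrand hn hc hr hint₂
      (fun τ hτ => mul_nonneg (hweight τ hτ) (hf0 _ (hu₂s hτ))) hbound₂)

theorem stmt_7_general (N : ℕ) (hN : 2 ≤ N) (T : ℝ) (hT1 : T ≤ 1)
    (K : ℝ → ℝ) (hKpos : ∀ τ ∈ Ico (0:ℝ) 1, 0 < K τ) (hKcont : ContinuousOn K (Ico 0 1))
    (f : ℝ → ℝ) (hfpos : ∀ s > (0:ℝ), 0 < f s) (hfmono : MonotoneOn f (Ioi 0))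
    (u₁ u₂ : ℝ → ℝ)
    (h₁cont : ContinuousOn u₁ (Ico 0 T)) (h₂cont : ContinuousOn u₂ (Ico 0 T))
    (h₁pos : ∀ r ∈ Ico (0:ℝ) T, 0 < u₁ r) (h₂pos : ∀ r ∈ Ico (0:ℝ) T, 0 < u₂ r)
    (h0 : u₁ 0 < u₂ 0)
    (hsub : ∀ r ∈ Ico (0:ℝ) T,
      u₁ r ≤ u₁ 0 + ∫ t in (0:ℝ)..r, t ^ ((2:ℝ) - N) / ((N:ℝ) - 1) *
        (∫ τ in (0:ℝ)..t, (N:ℝ) * τ ^ ((N:ℝ) - 1) * K τ * f (u₁ τ)) ^ (((N:ℝ) - 1) / N))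
    (hsup : ∀ r ∈ Ico (0:ℝ) T,
      u₂ r ≥ u₂ 0 + ∫ t in (0:ℝ)..r, t ^ ((2:ℝ) - N) / ((N:ℝ) - 1) *
        (∫ τ in (0:ℝ)..t, (N:ℝ) * τ ^ ((N:ℝ) - 1) * K τ * f (u₂ τ)) ^ (((N:ℝ) - 1) / N)) :
    ∀ r ∈ Ico (0:ℝ) T, u₁ r < u₂ r := by
  intro r hr
  by_contra! hle
  have hrT : Icc 0 r ⊆ Ico 0 T := fun x hx => ⟨hx.1, hx.2.trans_lt hr.2⟩
  obtain ⟨r₀, hr₀, hcross, hbefore⟩ :=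
    exists_first_crossing hr.1 (h₁cont.mono hrT) (h₂cont.mono hrT) hle
  have hr₀T : Icc 0 r₀ ⊆ Ico 0 T := (Icc_subset_Icc_right hr₀.2).trans hrT
  have hr₀1 : Icc 0 r₀ ⊆ Ico 0 1 := fun x hx => ⟨(hr₀T hx).1, (hr₀T hx).2.trans_le hT1⟩
  have key := integral_radialIntegrand_density_mono (n := N) (by exact_mod_cast hN) hr₀.1
    (hKcont.mono hr₀1) (fun τ hτ => (hKpos τ (hr₀1 hτ)).le) hfmono (fun x hx => (hfpos x hx).le)
    (fun τ hτ => h₁pos τ (hr₀T hτ)) (h₂cont.mono hr₀T) (fun τ hτ => h₂pos τ (hr₀T hτ))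
    (fun τ hτ => (hbefore τ (Ioo_subset_Ico_self hτ)).le)
  simp only [radialIntegrand] at key
  linarith [hsub r₀ (hrT hr₀), hsup r₀ (hrT hr₀)]

/-- Comparison principle in integral form. -/
theorem stmt_7 (N : ℕ) (hN : 2 ≤ N) (T : ℝ) (hT0 : 0 < T) (hT1 : T ≤ 1)
    (K : ℝ → ℝ) (hKpos : ∀ τ ∈ Ico (0:ℝ) 1, 0 < K τ) (hKcont : ContinuousOn K (Ico 0 1))
    (f : ℝ → ℝ) (hfpos : ∀ s > (0:ℝ), 0 < f s) (hfmono : MonotoneOn f (Ioi 0))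
    (u₁ u₂ : ℝ → ℝ)
    (h₁cont : ContinuousOn u₁ (Ico 0 T)) (h₂cont : ContinuousOn u₂ (Ico 0 T))
    (h₁pos : ∀ r ∈ Ico (0:ℝ) T, 0 < u₁ r) (h₂pos : ∀ r ∈ Ico (0:ℝ) T, 0 < u₂ r)
    (h0 : u₁ 0 < u₂ 0)
    (hsub : ∀ r ∈ Ico (0:ℝ) T,
      u₁ r ≤ u₁ 0 + ∫ t in (0:ℝ)..r, t ^ ((2:ℝ) - N) / ((N:ℝ) - 1) *
        (∫ τ in (0:ℝ)..t, (N:ℝ) * τ ^ ((N:ℝ) - 1) * K τ * f (u₁ τ)) ^ (((N:ℝ) - 1) / N))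
    (hsup : ∀ r ∈ Ico (0:ℝ) T,
      u₂ r ≥ u₂ 0 + ∫ t in (0:ℝ)..r, t ^ ((2:ℝ) - N) / ((N:ℝ) - 1) *
        (∫ τ in (0:ℝ)..t, (N:ℝ) * τ ^ ((N:ℝ) - 1) * K τ * f (u₂ τ)) ^ (((N:ℝ) - 1) / N)) :
    ∀ r ∈ Ico (0:ℝ) T, u₁ r < u₂ r :=
  stmt_7_general N hN T hT1 K hKpos hKcont f hfpos hfmono u₁ u₂ h₁cont h₂cont h₁pos h₂pos h0 hsub
    hsup
end

section
/- With g the inverse of G as above, g is twice differentiable on (0,∞) and g''(t) = f(g(t)) / ((2N−1)/(N−1)·F(g(t)))^{1/(2N−1)}; consequently (g'(t))^{1/(N−1)} · g''(t) = f(g(t)) for all t > 0. -/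
/-!
Write `κ = (2N-1)/(N-1)` and `p = (N-1)/(2N-1)`, so that `κ p = 1`. Since `G' = (κ F)^(-p)` on
`(a, ∞)` and `g` is a continuous inverse of `G`, the inverse function theorem gives the
autonomous equation `g' = (κ F ∘ g)^p`. Differentiating it once more,
`g'' = p κ f(g) (κ F(g))^(p-1) (κ F(g))^p = f(g) / (κ F(g))^(1-2p)`, and `1 - 2p = 1/(2N-1)`
is exactly `p/(N-1)`, so `(g')^(1/(N-1))` cancels the denominator.
-/

open Set Filter Topology intervalIntegral MeasureTheory

section Primitive

variable {f : ℝ → ℝ} {a : ℝ}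

lemma intervalIntegrable_of_continuousOn_Ioi (hf : ContinuousOn f (Ioi a)) {b c : ℝ}
    (hb : a < b) (hc : a < c) : IntervalIntegrable f volume b c :=
  (hf.mono fun _ hx => lt_of_lt_of_le (lt_min hb hc) hx.1).intervalIntegrable

lemma hasDerivAt_integral_of_continuousOn_Ioi (hf : ContinuousOn f (Ioi a)) {b x : ℝ}
    (hab : IntervalIntegrable f volume a b) (hb : a < b) (hx : a < x) :
    HasDerivAt (fun u => ∫ s in a..u, f s) (f x) x :=
  integral_hasDerivAt_right (hab.trans (intervalIntegrable_of_continuousOn_Ioi hf hb hx))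
    (hf.stronglyMeasurableAtFilter isOpen_Ioi x hx) (hf.continuousAt (Ioi_mem_nhds hx))

lemma integral_pos_of_integral_pos_of_le (hf : ContinuousOn f (Ioi 0))
    (hf₀ : ∀ s > 0, 0 ≤ f s) (ha : 0 < a) (hFa : 0 < ∫ s in (0:ℝ)..a, f s) {t : ℝ}
    (hat : a ≤ t) : 0 < ∫ s in (0:ℝ)..t, f s := by
  rw [← integral_add_adjacent_intervals (intervalIntegrable_of_integral_ne_zero hFa.ne')
    (intervalIntegrable_of_continuousOn_Ioi hf ha (ha.trans_le hat))]
  have : 0 ≤ ∫ s in a..t, f s := integral_nonneg hat fun s hs => hf₀ s (ha.trans_le hs.1)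
  linarith

end Primitive

section RightInverse

variable {G g : ℝ → ℝ} {a b : ℝ}

lemma lt_of_rightInverse (hGa : G a = b) (hGg : ∀ s ≥ b, G (g s) = s)
    (hgmem : ∀ s ≥ b, a ≤ g s) {s : ℝ} (hs : b < s) : a < g s := by
  refine (hgmem s hs.le).lt_of_ne fun h => hs.ne ?_
  rw [← hGa, h, hGg s hs.le]

lemma strictMonoOn_of_rightInverse (hGmono : StrictMonoOn G (Ici a))
    (hGg : ∀ s ≥ b, G (g s) = s) (hgmem : ∀ s ≥ b, a ≤ g s) : StrictMonoOn g (Ici b) :=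
  fun s₁ h₁ s₂ h₂ h12 =>
    (hGmono.lt_iff_lt (hgmem s₁ h₁) (hgmem s₂ h₂)).1 (by rwa [hGg s₁ h₁, hGg s₂ h₂])

lemma continuousAt_of_rightInverse (hGmono : StrictMonoOn G (Ici a))
    (hgG : ∀ t ≥ a, g (G t) = t) (hGa : G a = b) (hGg : ∀ s ≥ b, G (g s) = s)
    (hgmem : ∀ s ≥ b, a ≤ g s) {s : ℝ} (hs : b < s) : ContinuousAt g s := by
  refine ((strictMonoOn_of_rightInverse hGmono hGg hgmem).mono Ioi_subset_Ici_self)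
    |>.continuousAt_of_image_mem_nhds (Ioi_mem_nhds hs) ?_
  refine mem_of_superset (Ioi_mem_nhds (lt_of_rightInverse hGa hGg hgmem hs))
    fun x (hx : a < x) => ⟨G x, ?_, hgG x hx.le⟩
  rw [← hGa]
  exact hGmono self_mem_Ici hx.le hx

lemma hasDerivAt_of_rightInverse {c : ℝ → ℝ} (hGd : ∀ x > a, HasDerivAt G (c x) x)
    (hc : ∀ x > a, c x ≠ 0) (hGmono : StrictMonoOn G (Ici a)) (hgG : ∀ t ≥ a, g (G t) = t)
    (hGa : G a = b) (hGg : ∀ s ≥ b, G (g s) = s) (hgmem : ∀ s ≥ b, a ≤ g s) {s : ℝ}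
    (hs : b < s) : HasDerivAt g (c (g s))⁻¹ s :=
  have hgs := lt_of_rightInverse hGa hGg hgmem hs
  (hGd _ hgs).of_local_left_inverse (continuousAt_of_rightInverse hGmono hgG hGa hGg hgmem hs)
    (hc _ hgs) ((eventually_gt_nhds hs).mono fun y hy => hGg y (le_of_lt hy))

end RightInverse

lemma hasDerivAt_deriv_of_eventually_hasDerivAt_comp {Φ g : ℝ → ℝ} {Φ' t : ℝ}
    (hg : ∀ᶠ s in 𝓝 t, HasDerivAt g (Φ (g s)) s) (hΦ : HasDerivAt Φ Φ' (g t)) :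
    HasDerivAt (deriv g) (Φ' * Φ (g t)) t :=
  (hΦ.comp t hg.self_of_nhds).congr_of_eventuallyEq (hg.mono fun _ hs => hs.deriv)

lemma hasDerivAt_deriv_of_hasDerivAt_rpow_comp {κ p : ℝ} (hκp : κ * p = 1) {F f g : ℝ → ℝ} {t : ℝ}
    (hg : ∀ᶠ s in 𝓝 t, HasDerivAt g ((κ * F (g s)) ^ p) s)
    (hF : HasDerivAt F (f (g t)) (g t)) (hFpos : 0 < κ * F (g t)) :
    HasDerivAt (deriv g) (f (g t) / (κ * F (g t)) ^ (1 - 2 * p)) t := by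
  convert hasDerivAt_deriv_of_eventually_hasDerivAt_comp hg
    ((hF.const_mul κ).rpow_const (Or.inl hFpos.ne')) using 1
  set z := κ * F (g t)
  calc f (g t) / z ^ (1 - 2 * p)
      = (κ * p) * f (g t) * z ^ (p - 1 + p) := by
        rw [hκp, div_eq_mul_inv, ← Real.rpow_neg hFpos.le]; ring_nf
    _ = κ * f (g t) * p * z ^ (p - 1) * z ^ p := by rw [Real.rpow_add hFpos]; ring

lemma rpow_rpow_mul_div_rpow {z p q r : ℝ} (hz : 0 < z) (h : p * q = r) (w : ℝ) :
    (z ^ p) ^ q * (w / z ^ r) = w := by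
  rw [← Real.rpow_mul hz.le, h, mul_div_cancel₀ _ (Real.rpow_pos_of_pos hz r).ne']

theorem stmt_10_general (N : ℕ) (hN : 2 ≤ N)
    (f : ℝ → ℝ) (hfpos : ∀ s > (0:ℝ), 0 < f s)
    (hfcont : ContinuousOn f (Ioi 0))
    (F : ℝ → ℝ) (hF : ∀ τ, F τ = ∫ s in (0:ℝ)..τ, f s)
    (a : ℝ) (ha : 0 < a) (hFa : 0 < F a)
    (G : ℝ → ℝ)
    (hG : ∀ t, G t = ∫ τ in a..t,
      ((2 * (N:ℝ) - 1) / ((N:ℝ) - 1) * F τ) ^ (-(((N:ℝ) - 1) / (2 * N - 1))))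
    (hGmono : StrictMonoOn G (Ici a))
    (g : ℝ → ℝ) (hgG : ∀ t ≥ a, g (G t) = t) (hGg : ∀ s ≥ (0:ℝ), G (g s) = s)
    (hgmem : ∀ s ≥ (0:ℝ), a ≤ g s) :
    ∀ t > (0:ℝ),
      HasDerivAt (deriv g)
        (f (g t) / ((2 * (N:ℝ) - 1) / ((N:ℝ) - 1) * F (g t)) ^ ((1:ℝ) / (2 * N - 1))) t ∧
      (deriv g t) ^ (((N:ℝ) - 1)⁻¹) * deriv (deriv g) t = f (g t) := by
  intro t ht
  have hn : (2:ℝ) ≤ N := by exact_mod_cast hN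
  have hn₁ : (N:ℝ) - 1 ≠ 0 := by linarith
  have hn₂ : 2 * (N:ℝ) - 1 ≠ 0 := by linarith
  set κ := (2 * (N:ℝ) - 1) / ((N:ℝ) - 1)
  set p := ((N:ℝ) - 1) / (2 * N - 1)
  have hκ : 0 < κ := div_pos (by linarith) (by linarith)
  have hκp : κ * p = 1 := by simp only [κ, p]; field_simp
  have hFd : ∀ x > 0, HasDerivAt F (f x) x := fun x hx => by
    rw [funext hF]
    exact hasDerivAt_integral_of_continuousOn_Ioi hfcont
      (intervalIntegrable_of_integral_ne_zero (hF a ▸ hFa.ne')) ha hx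
  have hFpos : ∀ x ≥ a, 0 < κ * F x := fun x hx => mul_pos hκ <| hF x ▸
    integral_pos_of_integral_pos_of_le hfcont (fun s hs => (hfpos s hs).le) ha (hF a ▸ hFa) hx
  have hc : ContinuousOn (fun x => (κ * F x) ^ (-p)) (Ici a) :=
    (continuousOn_const.mul fun x hx => (hFd x (ha.trans_le hx)).continuousAt.continuousWithinAt)
      |>.rpow_const fun x hx => Or.inl (hFpos x hx).ne'
  have hGd : ∀ x > a, HasDerivAt G ((κ * F x) ^ (-p)) x := fun x hx => by
    rw [funext hG]
    exact hasDerivAt_integral_of_continuousOn_Ioi (hc.mono Ioi_subset_Ici_self)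
      ((hc.mono Icc_subset_Ici_self).intervalIntegrable_of_Icc hx.le) hx hx
  have hgd : ∀ s > 0, HasDerivAt g ((κ * F (g s)) ^ p) s := fun s hs => by
    have := hasDerivAt_of_rightInverse hGd (fun x hx => (Real.rpow_pos_of_pos
      (hFpos x hx.le) _).ne') hGmono hgG (by rw [hG, integral_same]) hGg hgmem hs
    rwa [Real.rpow_neg (hFpos _ (hgmem s hs.le)).le, inv_inv] at this
  have hzpos := hFpos (g t) (hgmem t ht.le)
  have hdd := hasDerivAt_deriv_of_hasDerivAt_rpow_comp hκp ((eventually_gt_nhds ht).mono hgd)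
    (hFd _ (ha.trans_le (hgmem t ht.le))) hzpos
  rw [show 1 - 2 * p = 1 / (2 * N - 1) by simp only [p]; field_simp; ring] at hdd
  refine ⟨hdd, ?_⟩
  rw [hdd.deriv, (hgd t ht).deriv]
  exact rpow_rpow_mul_div_rpow hzpos (by simp only [p]; field_simp) _

/-- The inverse g of G is twice differentiable on (0,∞) with
g''(t) = f(g(t)) / ((2N−1)/(N−1)·F(g(t)))^{1/(2N−1)}; consequently
(g'(t))^{1/(N−1)} · g''(t) = f(g(t)) for all t > 0. -/
theorem stmt_10 (N : ℕ) (hN : 2 ≤ N)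
    (f : ℝ → ℝ) (hfpos : ∀ s > (0:ℝ), 0 < f s) (hfmono : MonotoneOn f (Ioi 0))
    (hfcont : ContinuousOn f (Ioi 0))
    (F : ℝ → ℝ) (hF : ∀ τ, F τ = ∫ s in (0:ℝ)..τ, f s)
    (a : ℝ) (ha : 0 < a) (hFa : 0 < F a)
    (G : ℝ → ℝ)
    (hG : ∀ t, G t = ∫ τ in a..t,
      ((2 * (N:ℝ) - 1) / ((N:ℝ) - 1) * F τ) ^ (-(((N:ℝ) - 1) / (2 * N - 1))))
    (hGmono : StrictMonoOn G (Ici a)) (hGtop : Tendsto G atTop atTop)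
    (g : ℝ → ℝ) (hgG : ∀ t ≥ a, g (G t) = t) (hGg : ∀ s ≥ (0:ℝ), G (g s) = s)
    (hgmem : ∀ s ≥ (0:ℝ), a ≤ g s) :
    ∀ t > (0:ℝ),
      HasDerivAt (deriv g)
        (f (g t) / ((2 * (N:ℝ) - 1) / ((N:ℝ) - 1) * F (g t)) ^ ((1:ℝ) / (2 * N - 1))) t ∧
      (deriv g t) ^ (((N:ℝ) - 1)⁻¹) * deriv (deriv g) t = f (g t) :=
  stmt_10_general N hN f hfpos hfcont F hF a ha hFa G hG hGmono g hgG hGg hgmem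
end

section
/- Let p : (0,1) → (0,∞) be C¹ with p' < 0, P(t) = ∫_t^1 p(s)ds, and φ(t) = ∫_t^1 ((N/(N−1))P(τ))^{(N−1)/N} dτ. Then for all t ∈ (0,1): (φ'(t))² / (φ(t)·φ''(t)) ≤ (2N−1)/(N−1). -/
open Set Filter Topology intervalIntegral MeasureTheory

/-!
With `α = (N-1)/N`, `c = N/(N-1)` and `Q = c P` we have `φ' = -Q^α` and
`φ'' = α c p Q^(α-1)`, and since `(2N-1)/(N-1) = (α+1)/α` the claim reduces to
`Q(t)^(α+1) ≤ (α+1) c p(t) φ(t)`. Both sides vanish at `t = 1`, and on `(t, 1)` the derivative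
of the right side minus the left, read as functions of the lower limit `s` with `p(t)` fixed,
is `(α+1) c Q(s)^α (p(s) - p(t)) ≤ 0` because `p` is decreasing.
-/

section TailIntegral

variable {f : ℝ → ℝ} {a b s : ℝ}

theorem hasDerivAt_integral_left_of_continuousOn {U : Set ℝ} (hU : IsOpen U)
    (hf : ContinuousOn f U) (hs : s ∈ U) (hint : IntervalIntegrable f volume s b) :
    HasDerivAt (fun u => ∫ x in u..b, f x) (-f s) s :=
  integral_hasDerivAt_left hint (hf.stronglyMeasurableAtFilter hU s hs)
    (hf.continuousAt (hU.mem_nhds hs))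

theorem continuousOn_integral_left_Icc (hint : IntervalIntegrable f volume s b) (hsb : s ≤ b) :
    ContinuousOn (fun u => ∫ x in u..b, f x) (Icc s b) := by
  rw [← uIcc_of_le hsb]
  refine continuousOn_primitive_interval_left ?_
  rw [uIcc_of_le hsb, integrableOn_Icc_iff_integrableOn_Ioc]
  exact (intervalIntegrable_iff_integrableOn_Ioc_of_le hsb).1 hint

theorem AntitoneOn.intervalIntegrable_of_nonneg (hf : AntitoneOn f (Ioo a b))
    (hc : ContinuousOn f (Ioo a b)) (h0 : ∀ x ∈ Ioo a b, 0 ≤ f x) (hs : s ∈ Ioo a b) :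
    IntervalIntegrable f volume s b := by
  have hsub : Ioo s b ⊆ Ioo a b := Ioo_subset_Ioo_left hs.1.le
  rw [intervalIntegrable_iff_integrableOn_Ioo_of_le hs.2.le]
  refine Integrable.mono' (integrable_const (f s))
    ((hc.mono hsub).aestronglyMeasurable measurableSet_Ioo) ?_
  filter_upwards [ae_restrict_mem measurableSet_Ioo] with x hx
  rw [Real.norm_eq_abs, abs_of_nonneg (h0 x (hsub hx))]
  exact hf hs (hsub hx) hx.1.le

end TailIntegral

section RpowProfile

variable {Q g : ℝ → ℝ} {b α : ℝ}

theorem rpow_add_one_le_mul_integral_rpow {t : ℝ} (htb : t ≤ b) (hα : 0 ≤ α)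
    (hQc : ContinuousOn Q (Icc t b)) (hQb : Q b = 0) (hQ0 : ∀ s ∈ Ioo t b, 0 ≤ Q s)
    (hQd : ∀ s ∈ Ioo t b, HasDerivAt Q (-g s) s) (hg : ∀ s ∈ Ioo t b, g s ≤ g t) :
    Q t ^ (α + 1) ≤ (α + 1) * g t * ∫ s in t..b, Q s ^ α := by
  have hqc : ContinuousOn (fun s => Q s ^ α) (Icc t b) := hQc.rpow_const fun _ _ => Or.inr hα
  set G := fun s => (α + 1) * g t * (∫ x in s..b, Q x ^ α) - Q s ^ (α + 1) with hG
  have hGd : ∀ s ∈ Ioo t b, HasDerivAt G ((α + 1) * Q s ^ α * (g s - g t)) s := by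
    intro s hs
    have hΦ := hasDerivAt_integral_left_of_continuousOn isOpen_Ioo
      (hqc.mono Ioo_subset_Icc_self) hs
      ((hqc.mono (Icc_subset_Icc_left hs.1.le)).intervalIntegrable_of_Icc hs.2.le)
    have hQα := (hQd s hs).rpow_const (p := α + 1) (Or.inr (by linarith))
    refine ((hΦ.const_mul ((α + 1) * g t)).sub hQα).congr_deriv ?_
    rw [add_sub_cancel_right]
    ring
  have hGanti : AntitoneOn G (Icc t b) := by
    refine antitoneOn_of_deriv_nonpos (convex_Icc t b) ?_ ?_ ?_
    · exact (continuousOn_const.mul (continuousOn_integral_left_Icc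
        (hqc.intervalIntegrable_of_Icc htb) htb)).sub
        (hQc.rpow_const fun _ _ => Or.inr (by linarith))
    · rw [interior_Icc]
      exact fun s hs => (hGd s hs).differentiableAt.differentiableWithinAt
    · rw [interior_Icc]
      intro s hs
      rw [(hGd s hs).deriv]
      have := Real.rpow_nonneg (hQ0 s hs) α
      exact mul_nonpos_of_nonneg_of_nonpos (by positivity) (sub_nonpos.2 (hg s hs))
  have hGtb := hGanti (left_mem_Icc.2 htb) (right_mem_Icc.2 htb) htb
  simp only [hG, integral_same, mul_zero, hQb, Real.zero_rpow (by linarith : α + 1 ≠ 0),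
    sub_zero, sub_nonneg] at hGtb
  exact hGtb

theorem sq_deriv_div_le_of_eq_integral_rpow {a : ℝ} {Φ : ℝ → ℝ} (hα : 0 < α)
    (hΦ : ∀ u, Φ u = ∫ x in u..b, Q x ^ α) (hQd : ∀ s ∈ Ioo a b, HasDerivAt Q (-g s) s)
    (hQc : ∀ s ∈ Ioo a b, ContinuousOn Q (Icc s b)) (hQb : Q b = 0)
    (hQpos : ∀ s ∈ Ioo a b, 0 < Q s) (hg : AntitoneOn g (Ioo a b)) {t : ℝ}
    (ht : t ∈ Ioo a b) :
    (deriv Φ t) ^ 2 / (Φ t * deriv (deriv Φ) t) ≤ (α + 1) / α := by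
  have hΦd : ∀ s ∈ Ioo a b, HasDerivAt Φ (-Q s ^ α) s := fun s hs => by
    have hQc' : ContinuousOn Q (Ioo a b) :=
      fun τ hτ => (hQd τ hτ).continuousAt.continuousWithinAt
    have hqc : ContinuousOn (fun τ => Q τ ^ α) (Ioo a b) :=
      hQc'.rpow_const fun _ _ => Or.inr hα.le
    have hqint : IntervalIntegrable (fun τ => Q τ ^ α) volume s b :=
      ((hQc s hs).rpow_const fun _ _ => Or.inr hα.le).intervalIntegrable_of_Icc hs.2.le
    exact funext hΦ ▸ hasDerivAt_integral_left_of_continuousOn isOpen_Ioo hqc hs hqint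
  have hΦ'' : deriv (deriv Φ) t = g t * α * Q t ^ (α - 1) := by
    have hev : deriv Φ =ᶠ[𝓝 t] fun s => -Q s ^ α := by
      filter_upwards [isOpen_Ioo.mem_nhds ht] with s hs
      exact (hΦd s hs).deriv
    have hq' : HasDerivAt (fun s => -Q s ^ α) _ t :=
      ((hQd t ht).rpow_const (Or.inl (hQpos t ht).ne')).neg
    rw [hev.deriv_eq, hq'.deriv]
    ring
  have htb : Ioo t b ⊆ Ioo a b := Ioo_subset_Ioo_left ht.1.le
  have hkey : Q t ^ (α + 1) ≤ (α + 1) * g t * Φ t := by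
    rw [hΦ t]
    exact rpow_add_one_le_mul_integral_rpow ht.2.le hα.le (hQc t ht) hQb
      (fun s hs => (hQpos s (htb hs)).le) (fun s hs => hQd s (htb hs))
      (fun s hs => hg ht (htb hs) hs.1.le)
  have hK : 0 < (α + 1) / α := by positivity
  have hsq : (deriv Φ t) ^ 2 ≤ (α + 1) / α * (Φ t * deriv (deriv Φ) t) := by
    have hQt := hQpos t ht
    calc (deriv Φ t) ^ 2 = Q t ^ (α + 1) * Q t ^ (α - 1) := by
          rw [(hΦd t ht).deriv, neg_sq, sq, ← Real.rpow_add hQt, ← Real.rpow_add hQt]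
          ring_nf
      _ ≤ (α + 1) * g t * Φ t * Q t ^ (α - 1) := by gcongr
      _ = (α + 1) / α * (Φ t * deriv (deriv Φ) t) := by
          rw [hΦ'']
          field_simp
  exact div_le_of_le_mul₀ ((mul_nonneg_iff_of_pos_left hK).1 ((sq_nonneg _).trans hsq))
    hK.le hsq

end RpowProfile

theorem stmt_14_general (N : ℕ) (hN : 2 ≤ N)
    (p : ℝ → ℝ) (hppos : ∀ t ∈ Ioo (0:ℝ) 1, 0 < p t)
    (hp' : ∀ t ∈ Ioo (0:ℝ) 1, deriv p t < 0)
    (P : ℝ → ℝ) (hP : ∀ τ, P τ = ∫ s in τ..1, p s)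
    (φ : ℝ → ℝ)
    (hφ : ∀ t, φ t = ∫ τ in t..1, ((N:ℝ) / ((N:ℝ) - 1) * P τ) ^ (((N:ℝ) - 1) / N)) :
    ∀ t ∈ Ioo (0:ℝ) 1,
      (deriv φ t) ^ 2 / (φ t * deriv (deriv φ) t) ≤ (2 * (N:ℝ) - 1) / ((N:ℝ) - 1) := by
  intro t ht
  have hN1 : (1:ℝ) < N := by exact_mod_cast hN
  set c : ℝ := (N:ℝ) / ((N:ℝ) - 1)
  set α : ℝ := ((N:ℝ) - 1) / N
  have hc : 0 < c := div_pos (by linarith) (by linarith)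
  have hK : (2 * (N:ℝ) - 1) / ((N:ℝ) - 1) = (α + 1) / α := by
    have : (N:ℝ) - 1 ≠ 0 := by linarith
    simp only [α]
    field_simp
    ring
  -- `deriv p < 0` forces differentiability, since `deriv` is `0` where `p` is not differentiable
  have hpd : DifferentiableOn ℝ p (Ioo 0 1) :=
    fun s hs => (differentiableAt_of_deriv_ne_zero (hp' s hs).ne).differentiableWithinAt
  have hpanti : AntitoneOn p (Ioo 0 1) :=
    antitoneOn_of_deriv_nonpos (convex_Ioo 0 1) hpd.continuousOn (by rwa [interior_Ioo])
      (by simpa only [interior_Ioo] using fun s hs => (hp' s hs).le)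
  have hpint : ∀ s ∈ Ioo (0:ℝ) 1, IntervalIntegrable p volume s 1 :=
    fun s hs => hpanti.intervalIntegrable_of_nonneg hpd.continuousOn
      (fun x hx => (hppos x hx).le) hs
  have hPeq : P = fun τ => ∫ s in τ..1, p s := funext hP
  rw [hK]
  refine sq_deriv_div_le_of_eq_integral_rpow (Q := fun s => c * P s) (g := fun s => c * p s)
    (div_pos (by linarith) (by linarith)) hφ (fun s hs => ?_) (fun s hs => ?_) (by simp [hP])
    (fun s hs => ?_) (fun x hx y hy hxy => mul_le_mul_of_nonneg_left (hpanti hx hy hxy) hc.le) ht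
  · exact ((hPeq ▸ hasDerivAt_integral_left_of_continuousOn isOpen_Ioo hpd.continuousOn hs
      (hpint s hs)).const_mul c).congr_deriv (mul_neg _ _)
  · exact continuousOn_const.mul (hPeq ▸ continuousOn_integral_left_Icc (hpint s hs) hs.2.le)
  · exact mul_pos hc (hP s ▸ intervalIntegral_pos_of_pos_on (hpint s hs)
      (fun x hx => hppos x ⟨hs.1.trans hx.1, hx.2⟩) hs.2)

/-- For all t ∈ (0,1): (φ'(t))²/(φ(t)·φ''(t)) ≤ (2N−1)/(N−1). -/
theorem stmt_14 (N : ℕ) (hN : 2 ≤ N)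
    (p : ℝ → ℝ) (hp : ContDiffOn ℝ 1 p (Ioo 0 1)) (hppos : ∀ t ∈ Ioo (0:ℝ) 1, 0 < p t)
    (hp' : ∀ t ∈ Ioo (0:ℝ) 1, deriv p t < 0)
    (P : ℝ → ℝ) (hP : ∀ τ, P τ = ∫ s in τ..1, p s)
    (hPpos : ∀ t ∈ Ioo (0:ℝ) 1, 0 < P t)
    (φ : ℝ → ℝ)
    (hφ : ∀ t, φ t = ∫ τ in t..1, ((N:ℝ) / ((N:ℝ) - 1) * P τ) ^ (((N:ℝ) - 1) / N))
    (hφpos : ∀ t ∈ Ioo (0:ℝ) 1, 0 < φ t) :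
    ∀ t ∈ Ioo (0:ℝ) 1,
      (deriv φ t) ^ 2 / (φ t * deriv (deriv φ) t) ≤ (2 * (N:ℝ) - 1) / ((N:ℝ) - 1) :=
  stmt_14_general N hN p hppos hp' P hP φ hφ
end

section
/- Let p : (0,∞) → (0,∞) be C¹ with p'(t) < 0 for all t > 0, and let P(τ) = ∫_τ^1 p(s) ds. Then lim_{t→0⁺} P(t)/p(t) = 0, provided lim_{t→0⁺} p(t) = ∞. -/
open Set Filter Topology intervalIntegral

/-! For `0 < t < δ`, monotonicity gives `0 ≤ ∫_t^δ p ≤ δ p(t)` once `p(δ) > 0`, while the rest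
`∫_δ^1 p` does not depend on `t` and is therefore negligible against `p(t) → ∞`. Hence
`limsup P(t)/p(t) ≤ δ` for every small `δ`. -/

theorem strictAntiOn_of_deriv_neg_of_convex {D : Set ℝ} (hD : Convex ℝ D) {f : ℝ → ℝ}
    (hf' : ∀ x ∈ D, deriv f x < 0) : StrictAntiOn f D :=
  strictAntiOn_of_deriv_neg hD
    (fun x hx => (differentiableAt_of_deriv_ne_zero (hf' x hx).ne).continuousAt.continuousWithinAt)
    (fun x hx => hf' x (interior_subset hx))

theorem intervalIntegral.integral_le_sub_mul_of_antitoneOn {f : ℝ → ℝ} {a b : ℝ} (hab : a ≤ b)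
    (hf : AntitoneOn f (Icc a b)) : ∫ x in a..b, f x ≤ (b - a) * f a := by
  have hle : ∫ x in a..b, f x ≤ ∫ _ in a..b, f a :=
    integral_mono_on hab (hf.mono (uIcc_of_le hab).subset).intervalIntegrable
      intervalIntegrable_const fun x hx => hf ⟨le_rfl, hab⟩ hx hx.1
  simpa using hle

theorem tendsto_integral_div_nhdsGT_zero_of_antitoneOn {f : ℝ → ℝ} {b : ℝ} (hb : 0 < b)
    (hf : AntitoneOn f (Ioc 0 b)) (htop : Tendsto f (𝓝[>] 0) atTop) :
    Tendsto (fun t => (∫ s in t..b, f s) / f t) (𝓝[>] 0) (𝓝 0) := by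
  rw [Metric.tendsto_nhds]
  intro ε hε
  obtain ⟨δ, ⟨hδ0, hδε⟩, hfδ⟩ : ∃ δ ∈ Ioo 0 (min ε b), 0 < f δ :=
    (Eventually.and (Ioo_mem_nhdsGT (lt_min hε hb)) (htop.eventually_gt_atTop 0)).exists
  have hδb : δ ≤ b := (hδε.trans_le (min_le_right _ _)).le
  set C := ∫ s in δ..b, f s
  have hC : Tendsto (fun t => C / f t) (𝓝[>] 0) (𝓝 0) := tendsto_const_nhds.div_atTop htop
  filter_upwards [Ioo_mem_nhdsGT hδ0, Metric.tendsto_nhds.1 hC (ε - δ)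
    (by linarith [min_le_left ε b])] with t ⟨ht0, htδ⟩ hCt
  have hf_tδ : AntitoneOn f (Icc t δ) := hf.mono fun s hs => ⟨ht0.trans_le hs.1, hs.2.trans hδb⟩
  have hsplit : ∫ s in t..b, f s = (∫ s in t..δ, f s) + C :=
    (integral_add_adjacent_intervals
      (hf_tδ.mono (uIcc_of_le htδ.le).subset).intervalIntegrable
      ((hf.mono fun s hs => ⟨hδ0.trans_le hs.1, hs.2⟩).mono
        (uIcc_of_le hδb).subset).intervalIntegrable).symm
  have hft : 0 < f t := hfδ.trans_le (hf_tδ ⟨le_rfl, htδ.le⟩ ⟨htδ.le, le_rfl⟩ htδ.le)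
  have hI_nonneg : 0 ≤ ∫ s in t..δ, f s :=
    integral_nonneg htδ.le fun s hs => hfδ.le.trans (hf_tδ hs ⟨htδ.le, le_rfl⟩ hs.2)
  have hI_le : (∫ s in t..δ, f s) / f t ≤ δ - t := by
    rw [div_le_iff₀ hft]
    exact integral_le_sub_mul_of_antitoneOn htδ.le hf_tδ
  rw [Real.dist_eq, sub_zero] at hCt ⊢
  calc |(∫ s in t..b, f s) / f t|
      ≤ |(∫ s in t..δ, f s) / f t| + |C / f t| := by rw [hsplit, add_div]; exact abs_add_le _ _
    _ < ε := by
        rw [abs_of_nonneg (div_nonneg hI_nonneg hft.le)]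
        linarith [min_le_left ε b]

theorem stmt_16_general (p : ℝ → ℝ) (hp' : ∀ t > (0:ℝ), deriv p t < 0)
    (hptop : Tendsto p (𝓝[>] 0) atTop)
    (P : ℝ → ℝ) (hP : ∀ τ, P τ = ∫ s in τ..1, p s) :
    Tendsto (fun t => P t / p t) (𝓝[>] 0) (𝓝 0) := by
  have hanti : AntitoneOn p (Ioc 0 1) :=
    (strictAntiOn_of_deriv_neg_of_convex (convex_Ioi 0) hp').antitoneOn.mono Ioc_subset_Ioi_self
  simpa only [hP] using tendsto_integral_div_nhdsGT_zero_of_antitoneOn one_pos hanti hptop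

/-- If p is C¹ on (0,∞), positive, strictly decreasing (p' < 0),
with p(t) → ∞ as t → 0⁺, and P(τ) = ∫_τ^1 p(s) ds, then lim_{t→0⁺} P(t)/p(t) = 0. -/
theorem stmt_16 (p : ℝ → ℝ) (hp : ContDiffOn ℝ 1 p (Ioi 0))
    (hppos : ∀ t > (0:ℝ), 0 < p t) (hp' : ∀ t > (0:ℝ), deriv p t < 0)
    (hptop : Tendsto p (𝓝[>] 0) atTop)
    (P : ℝ → ℝ) (hP : ∀ τ, P τ = ∫ s in τ..1, p s) :
    Tendsto (fun t => P t / p t) (𝓝[>] 0) (𝓝 0) :=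
  stmt_16_general p hp' hptop P hP
end

section
/- Uniqueness of local solutions: Let K : [0,1) → (0,∞) be continuous and f : (0,∞) → (0,∞) nondecreasing and locally Lipschitz, and fix u₀ > 0. Then there exists h > 0 such that the integral equation u(r) = u₀ + ∫₀^r (t^{2−N}/(N−1)) (∫₀^t Nτ^{N−1}K(τ)f(u(τ))dτ)^{(N−1)/N} dt has at most one continuous solution u : [0,h] → ℝ with ‖u − u₀‖_∞ ≤ h. -/
/-!
Write the equation as `u = u₀ + T (K · f ∘ u)`. Near `r = 0` the source `g = K · f ∘ u` of a
`u` with `|u - u₀| ≤ h` is bounded below by some `m > 0`, so the inner integral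
`A_g(t) = ∫₀ᵗ N τ^{N-1} g` is at least `m tᴺ`. On `[m tᴺ, ∞)` the power `A ↦ A^{(N-1)/N}` is
Lipschitz with constant of order `t⁻¹`, while `|A_{g₁}(t) - A_{g₂}(t)| ≤ ‖g₁ - g₂‖ tᴺ`; together
with the weight `t^{2-N}` this gives `|T g₁ - T g₂|(r) ≲ ‖g₁ - g₂‖ r²`. Since `f` is locally
Lipschitz, `u ↦ u₀ + T (K · f ∘ u)` is a contraction on such functions once `h` is small,
so two solutions coincide.
-/

open Set Filter Topology intervalIntegral MeasureTheory

lemma abs_rpow_sub_rpow_le_of_le {α m a b : ℝ} (hα₀ : 0 ≤ α) (hα₁ : α ≤ 1) (hm : 0 < m)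
    (ha : m ≤ a) (hb : m ≤ b) : |a ^ α - b ^ α| ≤ α * m ^ (α - 1) * |a - b| := by
  have hderiv : ∀ x ∈ Ici m, HasDerivWithinAt (fun x => x ^ α) (α * x ^ (α - 1)) (Ici m) x :=
    fun x hx => (Real.hasDerivAt_rpow_const (Or.inl (hm.trans_le hx).ne')).hasDerivWithinAt
  have hbound : ∀ x ∈ Ici m, ‖α * x ^ (α - 1)‖ ≤ α * m ^ (α - 1) := fun x hx => by
    have hx₀ : 0 ≤ x ^ (α - 1) := Real.rpow_nonneg (hm.le.trans hx) _
    rw [Real.norm_eq_abs, abs_of_nonneg (mul_nonneg hα₀ hx₀)]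
    exact mul_le_mul_of_nonneg_left (Real.rpow_le_rpow_of_nonpos hm hx (by linarith)) hα₀
  exact (convex_Ici m).norm_image_sub_le_of_norm_hasDerivWithin_le hderiv hbound hb ha

lemma mul_rpow_rpow_div {p c t : ℝ} (hp : p ≠ 0) (hc : 0 ≤ c) (ht : 0 ≤ t) (q : ℝ) :
    (c * t ^ p) ^ (q / p) = c ^ (q / p) * t ^ q := by
  rw [Real.mul_rpow hc (Real.rpow_nonneg ht _), ← Real.rpow_mul ht, mul_div_cancel₀ q hp]

/-- For `p = N` this is, up to the area of the unit sphere, the integral of the radial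
function `g` over the ball of radius `t` in `ℝᴺ`. -/
noncomputable def radialMass (p : ℝ) (g : ℝ → ℝ) (t : ℝ) : ℝ :=
  ∫ τ in (0:ℝ)..t, p * τ ^ (p - 1) * g τ

noncomputable def radialSlope (p : ℝ) (g : ℝ → ℝ) (t : ℝ) : ℝ :=
  t ^ (2 - p) / (p - 1) * radialMass p g t ^ ((p - 1) / p)

noncomputable def radialOperator (p : ℝ) (g : ℝ → ℝ) (r : ℝ) : ℝ :=
  ∫ t in (0:ℝ)..r, radialSlope p g t

section radialMass

variable {p t : ℝ} {g g₁ g₂ : ℝ → ℝ}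

lemma radialMass_const (hp : 0 < p) (c t : ℝ) : radialMass p (fun _ => c) t = c * t ^ p := by
  simp only [radialMass, mul_right_comm _ _ c]
  rw [intervalIntegral.integral_const_mul, integral_rpow (Or.inl (by linarith)), sub_add_cancel,
    Real.zero_rpow hp.ne', sub_zero]
  field_simp

lemma intervalIntegrable_radialMass_integrand (hp : 0 < p) (ht : 0 ≤ t)
    (hg : ContinuousOn g (Icc 0 t)) :
    IntervalIntegrable (fun τ => p * τ ^ (p - 1) * g τ) volume 0 t :=
  ((intervalIntegrable_rpow' (by linarith)).const_mul p).mul_continuousOn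
    (by rwa [uIcc_of_le ht])

lemma radialMass_mono (hp : 0 < p) (ht : 0 ≤ t) (hg₁ : ContinuousOn g₁ (Icc 0 t))
    (hg₂ : ContinuousOn g₂ (Icc 0 t)) (hle : ∀ τ ∈ Icc 0 t, g₁ τ ≤ g₂ τ) :
    radialMass p g₁ t ≤ radialMass p g₂ t :=
  integral_mono_on ht (intervalIntegrable_radialMass_integrand hp ht hg₁)
    (intervalIntegrable_radialMass_integrand hp ht hg₂) fun τ hτ =>
      mul_le_mul_of_nonneg_left (hle τ hτ)
        (mul_nonneg hp.le (Real.rpow_nonneg hτ.1 _))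

lemma mul_rpow_le_radialMass {m : ℝ} (hp : 0 < p) (ht : 0 ≤ t) (hg : ContinuousOn g (Icc 0 t))
    (hm : ∀ τ ∈ Icc 0 t, m ≤ g τ) : m * t ^ p ≤ radialMass p g t :=
  radialMass_const hp m t ▸ radialMass_mono hp ht continuousOn_const hg hm

lemma radialMass_le_mul_rpow {M : ℝ} (hp : 0 < p) (ht : 0 ≤ t) (hg : ContinuousOn g (Icc 0 t))
    (hM : ∀ τ ∈ Icc 0 t, g τ ≤ M) : radialMass p g t ≤ M * t ^ p :=
  radialMass_const hp M t ▸ radialMass_mono hp ht hg continuousOn_const hM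

lemma radialMass_sub (hp : 0 < p) (ht : 0 ≤ t) (hg₁ : ContinuousOn g₁ (Icc 0 t))
    (hg₂ : ContinuousOn g₂ (Icc 0 t)) :
    radialMass p g₁ t - radialMass p g₂ t = radialMass p (fun τ => g₁ τ - g₂ τ) t := by
  rw [radialMass, radialMass, ← integral_sub (intervalIntegrable_radialMass_integrand hp ht hg₁)
    (intervalIntegrable_radialMass_integrand hp ht hg₂)]
  simp only [radialMass, mul_sub]

lemma abs_radialMass_sub_le {D : ℝ} (hp : 0 < p) (ht : 0 ≤ t) (hg₁ : ContinuousOn g₁ (Icc 0 t))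
    (hg₂ : ContinuousOn g₂ (Icc 0 t)) (hD : ∀ τ ∈ Icc 0 t, |g₁ τ - g₂ τ| ≤ D) :
    |radialMass p g₁ t - radialMass p g₂ t| ≤ D * t ^ p := by
  rw [radialMass_sub hp ht hg₁ hg₂, abs_le, ← neg_mul]
  exact ⟨mul_rpow_le_radialMass hp ht (hg₁.sub hg₂) fun τ hτ => neg_le_of_abs_le (hD τ hτ),
    radialMass_le_mul_rpow hp ht (hg₁.sub hg₂) fun τ hτ => le_of_abs_le (hD τ hτ)⟩

lemma continuousOn_radialMass (hp : 0 < p) (ht : 0 ≤ t) (hg : ContinuousOn g (Icc 0 t)) :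
    ContinuousOn (radialMass p g) (Icc 0 t) := by
  have := continuousOn_primitive_interval' (intervalIntegrable_radialMass_integrand hp ht hg)
    left_mem_uIcc
  rwa [uIcc_of_le ht] at this

end radialMass

section radialSlope

variable {p t : ℝ} {g g₁ g₂ : ℝ → ℝ}

lemma norm_radialSlope_le {M : ℝ} (hp : 1 < p) (ht : 0 < t) (hg : ContinuousOn g (Icc 0 t))
    (hg₀ : ∀ τ ∈ Icc 0 t, 0 ≤ g τ) (hgM : ∀ τ ∈ Icc 0 t, g τ ≤ M) :
    ‖radialSlope p g t‖ ≤ M ^ ((p - 1) / p) / (p - 1) * t := by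
  have hp₀ : 0 < p := by linarith
  have h0 : (0:ℝ) ∈ Icc 0 t := left_mem_Icc.2 ht.le
  have hA₀ : 0 ≤ radialMass p g t := by
    simpa using mul_rpow_le_radialMass hp₀ ht.le hg hg₀
  have hA : radialMass p g t ^ ((p - 1) / p) ≤ M ^ ((p - 1) / p) * t ^ (p - 1) := by
    rw [← mul_rpow_rpow_div hp₀.ne' ((hg₀ 0 h0).trans (hgM 0 h0)) ht.le]
    exact Real.rpow_le_rpow hA₀ (radialMass_le_mul_rpow hp₀ ht.le hg hgM)
      (div_nonneg (by linarith) hp₀.le)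
  have hfac : 0 ≤ t ^ (2 - p) / (p - 1) := div_nonneg (Real.rpow_nonneg ht.le _) (by linarith)
  have htt : t ^ (2 - p) * t ^ (p - 1) = t := by
    rw [← Real.rpow_add ht, show 2 - p + (p - 1) = 1 by ring, Real.rpow_one]
  rw [radialSlope, Real.norm_eq_abs, abs_of_nonneg (mul_nonneg hfac (Real.rpow_nonneg hA₀ _))]
  calc t ^ (2 - p) / (p - 1) * radialMass p g t ^ ((p - 1) / p)
      ≤ t ^ (2 - p) / (p - 1) * (M ^ ((p - 1) / p) * t ^ (p - 1)) :=
        mul_le_mul_of_nonneg_left hA hfac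
    _ = M ^ ((p - 1) / p) / (p - 1) * t := by
        linear_combination M ^ ((p - 1) / p) / (p - 1) * htt

lemma intervalIntegrable_radialSlope {r : ℝ} (hp : 1 < p) (hr : 0 ≤ r)
    (hg : ContinuousOn g (Icc 0 r)) (hg₀ : ∀ τ ∈ Icc 0 r, 0 ≤ g τ) :
    IntervalIntegrable (radialSlope p g) volume 0 r := by
  have hp₀ : 0 < p := by linarith
  obtain ⟨M, hM⟩ := isCompact_Icc.exists_bound_of_continuousOn hg
  have hcont : ContinuousOn (radialSlope p g) (Ioc 0 r) :=
    ((continuousOn_id.rpow_const fun t ht => Or.inl ht.1.ne').div_const _).mul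
      (((continuousOn_radialMass hp₀ hr hg).rpow_const fun _ _ =>
        Or.inr (div_nonneg (by linarith) hp₀.le)).mono Ioc_subset_Icc_self)
  rw [intervalIntegrable_iff_integrableOn_Ioc_of_le hr]
  refine Integrable.mono' (continuous_const_mul (M ^ ((p - 1) / p) / (p - 1))).integrableOn_Ioc
    (hcont.aestronglyMeasurable measurableSet_Ioc) ?_
  filter_upwards [ae_restrict_mem measurableSet_Ioc] with t ht
  have hsub : Icc 0 t ⊆ Icc 0 r := Icc_subset_Icc_right ht.2
  exact norm_radialSlope_le hp ht.1 (hg.mono hsub) (fun τ hτ => hg₀ τ (hsub hτ))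
    fun τ hτ => (Real.le_norm_self _).trans (hM τ (hsub hτ))

lemma abs_radialSlope_sub_le {m D : ℝ} (hp : 1 < p) (hm : 0 < m) (ht : 0 < t)
    (hg₁ : ContinuousOn g₁ (Icc 0 t)) (hg₂ : ContinuousOn g₂ (Icc 0 t))
    (hm₁ : ∀ τ ∈ Icc 0 t, m ≤ g₁ τ) (hm₂ : ∀ τ ∈ Icc 0 t, m ≤ g₂ τ)
    (hD : ∀ τ ∈ Icc 0 t, |g₁ τ - g₂ τ| ≤ D) :
    |radialSlope p g₁ t - radialSlope p g₂ t| ≤ m ^ (-1 / p) * D / p * t := by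
  have hp₀ : 0 < p := by linarith
  set α := (p - 1) / p with hα
  have hα₀ : 0 ≤ α := div_nonneg (by linarith) hp₀.le
  have hα₁ : α ≤ 1 := (div_le_one hp₀).2 (by linarith)
  have hmt : 0 < m * t ^ p := by positivity
  have hrpow := abs_rpow_sub_rpow_le_of_le hα₀ hα₁ hmt
    (mul_rpow_le_radialMass hp₀ ht.le hg₁ hm₁) (mul_rpow_le_radialMass hp₀ ht.le hg₂ hm₂)
  rw [show α - 1 = -1 / p by rw [hα]; field_simp; ring,
    mul_rpow_rpow_div hp₀.ne' hm.le ht.le] at hrpow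
  have hmass := abs_radialMass_sub_le hp₀ ht.le hg₁ hg₂ hD
  have hfac : 0 ≤ t ^ (2 - p) / (p - 1) := div_nonneg (Real.rpow_nonneg ht.le _) (by linarith)
  have htt : t ^ (2 - p) * (t ^ (-1:ℝ) * t ^ p) = t := by
    rw [← Real.rpow_add ht, ← Real.rpow_add ht, show 2 - p + (-1 + p) = 1 by ring,
      Real.rpow_one]
  rw [radialSlope, radialSlope, ← mul_sub, abs_mul, abs_of_nonneg hfac]
  calc t ^ (2 - p) / (p - 1) * |radialMass p g₁ t ^ α - radialMass p g₂ t ^ α|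
      ≤ t ^ (2 - p) / (p - 1) * (α * (m ^ (-1 / p) * t ^ (-1:ℝ)) * (D * t ^ p)) := by
        gcongr
        exact hrpow.trans (mul_le_mul_of_nonneg_left hmass (by positivity))
    _ = α / (p - 1) * m ^ (-1 / p) * D * (t ^ (2 - p) * (t ^ (-1:ℝ) * t ^ p)) := by ring
    _ = m ^ (-1 / p) * D / p * t := by
        rw [htt, hα, div_div_cancel_left' (by linarith : p - 1 ≠ 0)]
        ring

end radialSlope

lemma abs_radialOperator_sub_le {p r m D : ℝ} {g₁ g₂ : ℝ → ℝ} (hp : 1 < p) (hm : 0 < m)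
    (hr : 0 ≤ r) (hg₁ : ContinuousOn g₁ (Icc 0 r)) (hg₂ : ContinuousOn g₂ (Icc 0 r))
    (hm₁ : ∀ τ ∈ Icc 0 r, m ≤ g₁ τ) (hm₂ : ∀ τ ∈ Icc 0 r, m ≤ g₂ τ)
    (hD : ∀ τ ∈ Icc 0 r, |g₁ τ - g₂ τ| ≤ D) :
    |radialOperator p g₁ r - radialOperator p g₂ r| ≤ m ^ (-1 / p) * D / p * (r ^ 2 / 2) := by
  have hsub : ∀ {t}, t ∈ Ioc 0 r → Icc 0 t ⊆ Icc 0 r := fun ht => Icc_subset_Icc_right ht.2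
  rw [radialOperator, radialOperator, ← integral_sub
    (intervalIntegrable_radialSlope hp hr hg₁ fun τ hτ => hm.le.trans (hm₁ τ hτ))
    (intervalIntegrable_radialSlope hp hr hg₂ fun τ hτ => hm.le.trans (hm₂ τ hτ)),
    ← Real.norm_eq_abs]
  calc ‖∫ t in (0:ℝ)..r, radialSlope p g₁ t - radialSlope p g₂ t‖
      ≤ ∫ t in (0:ℝ)..r, m ^ (-1 / p) * D / p * t :=
        intervalIntegral.norm_integral_le_of_norm_le hr (Eventually.of_forall fun t ht =>
          abs_radialSlope_sub_le hp hm ht.1 (hg₁.mono (hsub ht)) (hg₂.mono (hsub ht))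
            (fun τ hτ => hm₁ τ (hsub ht hτ)) (fun τ hτ => hm₂ τ (hsub ht hτ))
            fun τ hτ => hD τ (hsub ht hτ))
          ((continuous_const_mul _).intervalIntegrable 0 r)
    _ = m ^ (-1 / p) * D / p * (r ^ 2 / 2) := by
        rw [intervalIntegral.integral_const_mul, integral_id]
        ring

lemma eqOn_of_eq_add_radialOperator {p h m L c : ℝ} {u v gu gv : ℝ → ℝ} (hp : 1 < p)
    (hh : 0 ≤ h) (hm : 0 < m) (hL : 0 ≤ L) (hsmall : m ^ (-1 / p) * L / p * h ^ 2 ≤ 1)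
    (hu : ContinuousOn u (Icc 0 h)) (hv : ContinuousOn v (Icc 0 h))
    (hgu : ContinuousOn gu (Icc 0 h)) (hgv : ContinuousOn gv (Icc 0 h))
    (hmu : ∀ τ ∈ Icc 0 h, m ≤ gu τ) (hmv : ∀ τ ∈ Icc 0 h, m ≤ gv τ)
    (hlip : ∀ τ ∈ Icc 0 h, |gu τ - gv τ| ≤ L * |u τ - v τ|)
    (hu_eq : ∀ r ∈ Icc 0 h, u r = c + radialOperator p gu r)
    (hv_eq : ∀ r ∈ Icc 0 h, v r = c + radialOperator p gv r) :
    EqOn u v (Icc 0 h) := by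
  obtain ⟨r₀, hr₀, hmax⟩ := isCompact_Icc.exists_isMaxOn (nonempty_Icc.2 hh) (hu.sub hv).abs
  have hsub : Icc 0 r₀ ⊆ Icc 0 h := Icc_subset_Icc_right hr₀.2
  have hΛ : 0 ≤ m ^ (-1 / p) * L / p := by
    have := Real.rpow_nonneg hm.le (-1 / p)
    exact div_nonneg (by positivity) (by linarith)
  have hM : |u r₀ - v r₀| ≤ |u r₀ - v r₀| / 2 := calc
    |u r₀ - v r₀| = |radialOperator p gu r₀ - radialOperator p gv r₀| := by
        rw [hu_eq r₀ hr₀, hv_eq r₀ hr₀, add_sub_add_left_eq_sub]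
    _ ≤ m ^ (-1 / p) * (L * |u r₀ - v r₀|) / p * (r₀ ^ 2 / 2) :=
        abs_radialOperator_sub_le hp hm hr₀.1 (hgu.mono hsub) (hgv.mono hsub)
          (fun τ hτ => hmu τ (hsub hτ)) (fun τ hτ => hmv τ (hsub hτ))
          fun τ hτ => (hlip τ (hsub hτ)).trans (mul_le_mul_of_nonneg_left (hmax (hsub hτ)) hL)
    _ = m ^ (-1 / p) * L / p * r₀ ^ 2 * (|u r₀ - v r₀| / 2) := by ring
    _ ≤ m ^ (-1 / p) * L / p * h ^ 2 * (|u r₀ - v r₀| / 2) := by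
        gcongr
        exacts [hr₀.1, hr₀.2]
    _ ≤ |u r₀ - v r₀| / 2 := mul_le_of_le_one_left (by positivity) hsmall
  intro r hr
  have hr' : |u r - v r| ≤ |u r₀ - v r₀| := hmax hr
  exact sub_eq_zero.1 (abs_nonpos_iff.1 (by linarith))

/-- Local uniqueness: there exists h > 0 such that the integral equation has
at most one continuous solution u : [0,h] → ℝ with ‖u − u₀‖_∞ ≤ h. -/
theorem stmt_17 (N : ℕ) (hN : 2 ≤ N)
    (K : ℝ → ℝ) (hKpos : ∀ τ ∈ Ico (0:ℝ) 1, 0 < K τ) (hKcont : ContinuousOn K (Ico 0 1))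
    (f : ℝ → ℝ) (hfpos : ∀ s > (0:ℝ), 0 < f s) (hfmono : MonotoneOn f (Ioi 0))
    (hflip : ∀ x > (0:ℝ), ∃ C > (0:ℝ), ∃ ε > (0:ℝ),
      LipschitzOnWith (Real.toNNReal C) f (Metric.ball x ε ∩ Ioi 0))
    (u₀ : ℝ) (hu₀ : 0 < u₀) :
    ∃ h > (0:ℝ), ∀ u v : ℝ → ℝ,
      ContinuousOn u (Icc 0 h) → ContinuousOn v (Icc 0 h) →
      (∀ r ∈ Icc (0:ℝ) h, |u r - u₀| ≤ h) → (∀ r ∈ Icc (0:ℝ) h, |v r - u₀| ≤ h) →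
      (∀ r ∈ Icc (0:ℝ) h,
        u r = u₀ + ∫ t in (0:ℝ)..r, t ^ ((2:ℝ) - N) / ((N:ℝ) - 1) *
          (∫ τ in (0:ℝ)..t, (N:ℝ) * τ ^ ((N:ℝ) - 1) * K τ * f (u τ)) ^ (((N:ℝ) - 1) / N)) →
      (∀ r ∈ Icc (0:ℝ) h,
        v r = u₀ + ∫ t in (0:ℝ)..r, t ^ ((2:ℝ) - N) / ((N:ℝ) - 1) *
          (∫ τ in (0:ℝ)..t, (N:ℝ) * τ ^ ((N:ℝ) - 1) * K τ * f (v τ)) ^ (((N:ℝ) - 1) / N)) →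
      ∀ r ∈ Icc (0:ℝ) h, u r = v r := by
  obtain ⟨C, hC, ε, hε, hLip⟩ := hflip u₀ hu₀
  have hsub : Icc (0:ℝ) (1 / 2) ⊆ Ico 0 1 := Icc_subset_Ico_right (by norm_num)
  have hne : (Icc (0:ℝ) (1 / 2)).Nonempty := nonempty_Icc.2 (by norm_num)
  obtain ⟨τ₁, hτ₁, hKmin⟩ := isCompact_Icc.exists_isMinOn hne (hKcont.mono hsub)
  obtain ⟨τ₂, hτ₂, hKmax⟩ := isCompact_Icc.exists_isMaxOn hne (hKcont.mono hsub)
  have hKτ₂ : 0 < K τ₂ := hKpos τ₂ (hsub hτ₂)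
  set m := K τ₁ * f (u₀ / 2)
  have hm : 0 < m := mul_pos (hKpos τ₁ (hsub hτ₁)) (hfpos _ (by linarith))
  set Λ := m ^ (-1 / (N:ℝ)) * (K τ₂ * C) / N
  have hsmall : ∀ᶠ h in 𝓝 (0:ℝ), h < 1 / 2 ∧ h < u₀ / 2 ∧ h < ε ∧ Λ * h ^ 2 < 1 :=
    (eventually_lt_nhds (by norm_num)).and <| (eventually_lt_nhds (by linarith)).and <|
      (eventually_lt_nhds hε).and <|
        (continuous_const_mul Λ |>.comp (continuous_pow 2)).continuousAt.eventually_lt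
          continuousAt_const (by simp)
  obtain ⟨h, ⟨hh_half, hh_u₀, hh_ε, hhΛ⟩, hh₀ : 0 < h⟩ :=
    ((hsmall.filter_mono nhdsWithin_le_nhds).and (self_mem_nhdsWithin (s := Ioi 0))).exists
  refine ⟨h, hh₀, fun u v hu hv hub hvb hueq hveq => ?_⟩
  have hIcc : Icc 0 h ⊆ Icc (0:ℝ) (1 / 2) := Icc_subset_Icc_right hh_half.le
  have hK : ∀ τ ∈ Icc 0 h, 0 < K τ := fun τ hτ => hKpos τ (hsub (hIcc hτ))
  have hmem : ∀ w : ℝ → ℝ, (∀ r ∈ Icc (0:ℝ) h, |w r - u₀| ≤ h) → ∀ τ ∈ Icc 0 h,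
      w τ ∈ Metric.ball u₀ ε ∩ Ioi 0 ∧ u₀ / 2 ≤ w τ := fun w hw τ hτ => by
    have := abs_le.1 (hw τ hτ)
    exact ⟨⟨(hw τ hτ).trans_lt hh_ε, show 0 < w τ by linarith⟩, by linarith⟩
  have hsource : ∀ w : ℝ → ℝ, ContinuousOn w (Icc 0 h) → (∀ r ∈ Icc (0:ℝ) h, |w r - u₀| ≤ h) →
      ContinuousOn (fun τ => K τ * f (w τ)) (Icc 0 h) ∧ ∀ τ ∈ Icc 0 h, m ≤ K τ * f (w τ) :=
    fun w hw hwb => ⟨(hKcont.mono (hIcc.trans hsub)).mul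
      (hLip.continuousOn.comp hw fun τ hτ => (hmem w hwb τ hτ).1), fun τ hτ =>
      mul_le_mul (hKmin (hIcc hτ))
        (hfmono (show 0 < u₀ / 2 by linarith) (hmem w hwb τ hτ).1.2 (hmem w hwb τ hτ).2)
        (hfpos _ (by linarith)).le (hK τ hτ).le⟩
  have hlip : ∀ τ ∈ Icc 0 h, |K τ * f (u τ) - K τ * f (v τ)| ≤ K τ₂ * C * |u τ - v τ| := by
    intro τ hτ
    have hf := hLip.dist_le_mul _ (hmem u hub τ hτ).1 _ (hmem v hvb τ hτ).1
    rw [Real.dist_eq, Real.dist_eq, Real.coe_toNNReal C hC.le] at hf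
    rw [← mul_sub, abs_mul, abs_of_pos (hK τ hτ), mul_assoc]
    exact mul_le_mul (hKmax (hIcc hτ)) hf (abs_nonneg _) hKτ₂.le
  refine eqOn_of_eq_add_radialOperator (c := u₀) (by exact_mod_cast hN) hh₀.le hm
    (mul_nonneg hKτ₂.le hC.le) hhΛ.le hu hv (hsource u hu hub).1 (hsource v hv hvb).1
    (hsource u hu hub).2 (hsource v hv hvb).2 hlip (fun r hr => ?_) (fun r hr => ?_)
  · simpa only [radialOperator, radialSlope, radialMass, mul_assoc] using hueq r hr
  · simpa only [radialOperator, radialSlope, radialMass, mul_assoc] using hveq r hr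
end
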